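/- arXiv:1805.06645 — 11 statements merged into one kernel-verified Lean document; each statement's English description precedes it below -/
import Mathlib

section
/- Let h_CD, h_CB, h_SC, h_SB, p_S, σ_B², σ_C², σ_D² > 0, β ≥ 0, λ ∈ [0,1], and R̃_B ≥ 0. Define R_{CD,S}(x) = log₂(1 − (1 − 2^{−R̃_B})·h_CD·(p_S·h_SB + σ_B²)/(h_CB·σ_D²) + (2^{−R̃_B}·h_CD/σ_D²)·x) and R_{SC}(x) = log₂(1 + p_S·h_SC/(β·x^λ + σ_C²)). Then the function F(x) = R_{CD,S}(x) − R_{SC}(x) is strictly increasing on the set of x > 0 where the argument of the first logarithm is positive; consequently the equation R_{CD,S}(x) = R_{SC}(x) has at most one solution on that set. -/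
/-!
The first rate is `log₂` of an affine function of `x` with positive slope `2^{-R̃_B} h_CD / σ_D²`,
hence strictly increasing wherever it is defined. In the second rate the residual
self-interference `β x^λ` grows with `x` (as `λ ≥ 0`), so the SINR and the rate decrease.
A strictly increasing difference vanishes at most once.
-/

open Set Real

theorem StrictMonoOn.sub_antitoneOn {α : Type*} [Preorder α] {f g : α → ℝ} {s : Set α}
    (hf : StrictMonoOn f s) (hg : AntitoneOn g s) : StrictMonoOn (fun x => f x - g x) s :=
  fun _ hx _ hy hxy => by linarith [hf hx hy hxy, hg hx hy hxy.le]

theorem StrictMonoOn.subsingleton_setOf_eq {α : Type*} [LinearOrder α] {f g : α → ℝ} {s : Set α}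
    (h : StrictMonoOn (fun x => f x - g x) s) : {x ∈ s | f x = g x}.Subsingleton :=
  fun _ hx _ hy => h.injOn hx.1 hy.1 <| by simp only [hx.2, hy.2, sub_self]

theorem strictMonoOn_logb_affine {b a m : ℝ} (hb : 1 < b) (hm : 0 < m) :
    StrictMonoOn (fun x => logb b (a + m * x)) {x | 0 < a + m * x} :=
  fun _ hx _ _ hxy => logb_lt_logb hb hx (by gcongr)

theorem antitoneOn_logb_one_add_div_rpow {b c β σ lam : ℝ} (hb : 1 < b) (hc : 0 ≤ c)
    (hβ : 0 ≤ β) (hσ : 0 < σ) (hlam : 0 ≤ lam) :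
    AntitoneOn (fun x => logb b (1 + c / (β * x ^ lam + σ))) (Ici 0) := by
  intro x (hx : 0 ≤ x) y (hy : 0 ≤ y) hxy
  apply logb_le_logb_of_le hb (by positivity)
  gcongr

theorem rate_difference_strictMono_and_unique_crossing_general
    (hCD hCB hSC hSB pS σB2 σC2 σD2 β lam RB : ℝ)
    (hhCD : 0 < hCD) (hhSC : 0 < hSC)
    (hpS : 0 < pS) (hσC : 0 < σC2) (hσD : 0 < σD2)
    (hβ : 0 ≤ β) (hlam : lam ∈ Icc (0 : ℝ) 1) :
    let RCDS : ℝ → ℝ := fun x =>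
      logb 2 (1 - (1 - (2 : ℝ) ^ (-RB)) * hCD * (pS * hSB + σB2) / (hCB * σD2)
        + ((2 : ℝ) ^ (-RB) * hCD / σD2) * x)
    let RSC : ℝ → ℝ := fun x => logb 2 (1 + pS * hSC / (β * x ^ lam + σC2))
    let S : Set ℝ := {x | 0 < x ∧
      0 < 1 - (1 - (2 : ℝ) ^ (-RB)) * hCD * (pS * hSB + σB2) / (hCB * σD2)
        + ((2 : ℝ) ^ (-RB) * hCD / σD2) * x}
    StrictMonoOn (fun x => RCDS x - RSC x) S ∧
      {x ∈ S | RCDS x = RSC x}.Subsingleton := by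
  intro RCDS RSC S
  have hRCDS : StrictMonoOn RCDS S :=
    (strictMonoOn_logb_affine one_lt_two (by positivity)).mono fun _ hx => hx.2
  have hRSC : AntitoneOn RSC S :=
    (antitoneOn_logb_one_add_div_rpow one_lt_two (by positivity) hβ hσC hlam.1).mono
      fun _ hx => hx.1.le
  have hF := hRCDS.sub_antitoneOn hRSC
  exact ⟨hF, hF.subsingleton_setOf_eq⟩

/-- `F = R_{CD,S} - R_{SC}` is strictly increasing on the set of positive
`x` where the argument of the first logarithm is positive, hence
`R_{CD,S}(x) = R_{SC}(x)` has at most one solution there. -/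
theorem rate_difference_strictMono_and_unique_crossing
    (hCD hCB hSC hSB pS σB2 σC2 σD2 β lam RB : ℝ)
    (hhCD : 0 < hCD) (hhCB : 0 < hCB) (hhSC : 0 < hSC) (hhSB : 0 < hSB)
    (hpS : 0 < pS) (hσB : 0 < σB2) (hσC : 0 < σC2) (hσD : 0 < σD2)
    (hβ : 0 ≤ β) (hlam : lam ∈ Icc (0 : ℝ) 1) (hRB : 0 ≤ RB) :
    let RCDS : ℝ → ℝ := fun x =>
      logb 2 (1 - (1 - (2 : ℝ) ^ (-RB)) * hCD * (pS * hSB + σB2) / (hCB * σD2)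
        + ((2 : ℝ) ^ (-RB) * hCD / σD2) * x)
    let RSC : ℝ → ℝ := fun x => logb 2 (1 + pS * hSC / (β * x ^ lam + σC2))
    let S : Set ℝ := {x | 0 < x ∧
      0 < 1 - (1 - (2 : ℝ) ^ (-RB)) * hCD * (pS * hSB + σB2) / (hCB * σD2)
        + ((2 : ℝ) ^ (-RB) * hCD / σD2) * x}
    StrictMonoOn (fun x => RCDS x - RSC x) S ∧
      {x ∈ S | RCDS x = RSC x}.Subsingleton :=
  rate_difference_strictMono_and_unique_crossing_general hCD hCB hSC hSB pS σB2 σC2 σD2 β lam RB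
    hhCD hhSC hpS hσC hσD hβ hlam
end

section
/- Let h_SB, h_SC, h_CB, h_CD be independent nonnegative random variables where h_ij has the exponential distribution with mean φ_ij > 0 (density (1/φ_ij)·e^{−x/φ_ij} on [0,∞)). Let θ, P_S, p_C, σ_B², σ_C², σ_D² > 0, β ≥ 0, λ ∈ [0,1], ξ_B > 0, ξ_D > 0, and let α satisfy ξ_B/(1+ξ_B) < α < 1. Define the random variables p_S = min(θ/h_SB, P_S), γ_SC = p_S·h_SC/(β·p_C^λ + σ_C²), γ_CB = α·p_C·h_CB/(p_S·h_SB + (1−α)·p_C·h_CB + σ_B²), γ_{CD,C} = α·p_C·h_CD/((1−α)·p_C·h_CD + σ_D²), γ_{CD,S} = (1−α)·p_C·h_CD/σ_D². Then ℙ{γ_CB ≥ ξ_B, γ_SC ≥ ξ_D, γ_{CD,C} ≥ ξ_B, γ_{CD,S} ≥ ξ_D} = (P₁ + P₂)·P₃, where P₁ = [φ_SC·θ/(φ_SB·ξ_D·(β·p_C^λ + σ_C²) + φ_SC·θ)]·exp(−(θ/P_S)·(ξ_D·(β·p_C^λ + σ_C²)/(φ_SC·θ) + 1/φ_SB))·exp(−ξ_B·(θ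 + σ_B²)/(φ_CB·p_C·(α − ξ_B + α·ξ_B))), P₂ = [φ_CB·p_C·(α − ξ_B + α·ξ_B)/(φ_SB·ξ_B·P_S + φ_CB·p_C·(α − ξ_B + α·ξ_B))]·exp(−ξ_D·(β·p_C^λ + σ_C²)/(φ_SC·P_S) − ξ_B·σ_B²/(φ_CB·p_C·(α − ξ_B + α·ξ_B)))·(1 − exp(−(θ/P_S)·(ξ_B·P_S/(φ_CB·p_C·(α − ξ_B + α·ξ_B)) + 1/φ_SB))), and P₃ = exp(−ξ_B·σ_D²/(φ_CD·p_C·(α − ξ_B + α·ξ_B))) if α ≤ (ξ_B·ξ_D + ξ_B)/(ξ_B·ξ_D + ξ_B + ξ_D), and P₃ = exp(−ξ_D·σ_D²/(φ_CD·p_C·(1 − α))) if α > (ξ_B·ξ_D + ξ_B)/(ξ_B·ξ_D + ξ_B + ξ_D). Consequently the joint outage probability 1 − ℙ{γ_CB ≥ ξ_B, γ_SC ≥ ξ_D, γ_{CD,C} ≥ ξ_B, γ_{CD,S} ≥ ξ_D} equals 1 − (P₁ + P₂)·P₃. -/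
set_option maxHeartbeats 2000000

open MeasureTheory ProbabilityTheory Real Set

lemma myint_Ioi (c a : ℝ) (hc : 0 < c) :
    ∫ x in Ioi a, exp (-(c*x)) = exp (-(c*a)) / c := by
  have h := integral_comp_mul_left_Ioi (fun x => exp (-x)) a hc
  simp only [smul_eq_mul] at h
  calc ∫ x in Ioi a, exp (-(c*x)) = c⁻¹ * ∫ x in Ioi (c*a), exp (-x) := h
    _ = exp (-(c*a)) / c := by rw [integral_exp_neg_Ioi]; ring

lemma myint_Ioc (c a : ℝ) (hc : 0 < c) (ha : 0 ≤ a) :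
    ∫ x in Ioc 0 a, exp (-(c*x)) = (1 - exp (-(c*a))) / c := by
  rw [← intervalIntegral.integral_of_le ha]
  have h := intervalIntegral.integral_comp_mul_left (fun x => exp (-x)) (a := 0) (b := a) hc.ne'
  simp only [smul_eq_mul, mul_zero] at h
  rw [h, intervalIntegral.integral_comp_neg (fun x => exp x), neg_zero, integral_exp, exp_zero]
  ring

lemma mylint_Ioi (c a K : ℝ) (hc : 0 < c) (hK : 0 ≤ K) :
    ∫⁻ x in Ioi a, ENNReal.ofReal (K * exp (-(c*x))) =
      ENNReal.ofReal (K * (exp (-(c*a)) / c)) := by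
  have hint : IntegrableOn (fun x => K * exp (-(c*x))) (Ioi a) := by
    have := (exp_neg_integrableOn_Ioi a hc).const_mul K
    simpa [neg_mul, IntegrableOn] using this
  rw [← ofReal_integral_eq_lintegral_ofReal hint (ae_of_all _ fun x => by positivity)]
  rw [MeasureTheory.integral_const_mul, myint_Ioi c a hc]

lemma mylint_Ioc (c a K : ℝ) (hc : 0 < c) (hK : 0 ≤ K) (ha : 0 ≤ a) :
    ∫⁻ x in Ioc 0 a, ENNReal.ofReal (K * exp (-(c*x))) =
      ENNReal.ofReal (K * ((1 - exp (-(c*a))) / c)) := by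
  have hint : IntegrableOn (fun x => K * exp (-(c*x))) (Ioc 0 a) := by
    have h0 : IntegrableOn (fun x => rexp (-c * x)) (Ioc 0 a) :=
      (exp_neg_integrableOn_Ioi 0 hc).mono_set Ioc_subset_Ioi_self
    have := h0.const_mul K
    simpa [neg_mul, IntegrableOn] using this
  rw [← ofReal_integral_eq_lintegral_ofReal hint (ae_of_all _ fun x => by positivity)]
  rw [MeasureTheory.integral_const_mul, myint_Ioc c a hc ha]

lemma expMeasure_neg_null (r : ℝ) : expMeasure r (Iio 0) = 0 := by
  rw [expMeasure, gammaMeasure, withDensity_apply _ measurableSet_Iio]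
  exact lintegral_exponentialPDF_of_nonpos le_rfl

lemma expMeasure_Ici (r t : ℝ) (hr : 0 < r) (ht : 0 ≤ t) :
    expMeasure r (Ici t) = ENNReal.ofReal (exp (-(r*t))) := by
  have habs : expMeasure r ≪ volume := by
    rw [expMeasure, gammaMeasure]; exact withDensity_absolutelyContinuous _ _
  rw [measure_congr (Ioi_ae_eq_Ici' (habs (measure_singleton t))).symm]
  rw [expMeasure, gammaMeasure, withDensity_apply _ measurableSet_Ioi]
  have : ∀ x ∈ Ioi t, gammaPDF 1 r x = ENNReal.ofReal (r * exp (-(r*x))) := fun x hx =>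
    exponentialPDF_of_nonneg (le_trans ht (le_of_lt hx))
  rw [setLIntegral_congr_fun measurableSet_Ioi this, mylint_Ioi r t r hr hr.le]
  congr 1
  field_simp

lemma expMeasure_eq_of_inter {r t : ℝ} (hr : 0 < r) (ht : 0 ≤ t) {S : Set ℝ}
    (h : S ∩ Ici 0 = Ici t) : expMeasure r S = ENNReal.ofReal (exp (-(r*t))) := by
  have hae : S =ᵐ[expMeasure r] Ici t := by
    rw [ae_eq_set]
    constructor
    · refine measure_mono_null (fun x hx => ?_) (expMeasure_neg_null r)
      by_contra hge
      simp only [mem_Iio, not_lt] at hge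
      exact hx.2 (by rw [← h]; exact ⟨hx.1, hge⟩)
    · refine measure_mono_null (fun x hx => ?_) (expMeasure_neg_null r)
      exfalso
      have hx0 : (0:ℝ) ≤ x := le_trans ht hx.1
      have : x ∈ S ∩ Ici 0 := by rw [h]; exact hx.1
      exact hx.2 this.1
  rw [measure_congr hae, expMeasure_Ici r t hr ht]

lemma tail_set (a b c m ξ : ℝ) (hm : 0 ≤ m) (hc : 0 < c) (hξ : 0 < ξ)
    (hab : 0 < a - ξ * b) (hb : 0 ≤ b) :
    {z : ℝ | ξ ≤ a * z / (m + b * z + c)} ∩ Ici 0 = Ici (ξ * (m + c) / (a - ξ * b)) := by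
  ext z
  simp only [mem_inter_iff, mem_setOf_eq, mem_Ici]
  constructor
  · rintro ⟨h1, h2⟩
    have hD : 0 < m + b * z + c := by nlinarith
    rw [le_div_iff₀ hD] at h1
    rw [div_le_iff₀ hab]
    nlinarith
  · intro h
    have ht0 : 0 ≤ ξ * (m + c) / (a - ξ * b) := by positivity
    have hz0 : 0 ≤ z := le_trans ht0 h
    have hD : 0 < m + b * z + c := by nlinarith
    rw [div_le_iff₀ hab] at h
    refine ⟨?_, hz0⟩
    rw [le_div_iff₀ hD]
    nlinarith

/-- Theorem 2: the joint success probability of the cooperative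
full-duplex D2D network equals `(P₁ + P₂) · P₃`, hence the joint outage
probability equals `1 − (P₁ + P₂) · P₃`. -/
theorem joint_outage_probability
    {Ω : Type*} [MeasureSpace Ω] [IsProbabilityMeasure (ℙ : Measure Ω)]
    (hSB hSC hCB hCD : Ω → ℝ) (φSB φSC φCB φCD : ℝ)
    (hφSB : 0 < φSB) (hφSC : 0 < φSC) (hφCB : 0 < φCB) (hφCD : 0 < φCD)
    (hmSB : Measurable hSB) (hmSC : Measurable hSC)
    (hmCB : Measurable hCB) (hmCD : Measurable hCD)
    (hindep : iIndepFun ![hSB, hSC, hCB, hCD] ℙ)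
    (hdSB : Measure.map hSB ℙ = expMeasure (1 / φSB))
    (hdSC : Measure.map hSC ℙ = expMeasure (1 / φSC))
    (hdCB : Measure.map hCB ℙ = expMeasure (1 / φCB))
    (hdCD : Measure.map hCD ℙ = expMeasure (1 / φCD))
    (θ PS pC σB2 σC2 σD2 β lam ξB ξD α : ℝ)
    (hθ : 0 < θ) (hPS : 0 < PS) (hpC : 0 < pC)
    (hσB : 0 < σB2) (hσC : 0 < σC2) (hσD : 0 < σD2)
    (hβ : 0 ≤ β) (hlam : lam ∈ Set.Icc (0 : ℝ) 1)
    (hξB : 0 < ξB) (hξD : 0 < ξD)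
    (hα₁ : ξB / (1 + ξB) < α) (hα₂ : α < 1) :
    let pS : Ω → ℝ := fun ω => min (θ / hSB ω) PS
    let γSC : Ω → ℝ := fun ω => pS ω * hSC ω / (β * pC ^ lam + σC2)
    let γCB : Ω → ℝ := fun ω =>
      α * pC * hCB ω / (pS ω * hSB ω + (1 - α) * pC * hCB ω + σB2)
    let γCDC : Ω → ℝ := fun ω => α * pC * hCD ω / ((1 - α) * pC * hCD ω + σD2)
    let γCDS : Ω → ℝ := fun ω => (1 - α) * pC * hCD ω / σD2
    let P1 : ℝ := φSC * θ / (φSB * ξD * (β * pC ^ lam + σC2) + φSC * θ) *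
      Real.exp (-(θ / PS) * (ξD * (β * pC ^ lam + σC2) / (φSC * θ) + 1 / φSB)) *
      Real.exp (-(ξB * (θ + σB2)) / (φCB * pC * (α - ξB + α * ξB)))
    let P2 : ℝ := φCB * pC * (α - ξB + α * ξB) /
        (φSB * ξB * PS + φCB * pC * (α - ξB + α * ξB)) *
      Real.exp (-(ξD * (β * pC ^ lam + σC2)) / (φSC * PS)
        - ξB * σB2 / (φCB * pC * (α - ξB + α * ξB))) *
      (1 - Real.exp (-(θ / PS) *
        (ξB * PS / (φCB * pC * (α - ξB + α * ξB)) + 1 / φSB)))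
    let P3 : ℝ :=
      if α ≤ (ξB * ξD + ξB) / (ξB * ξD + ξB + ξD) then
        Real.exp (-(ξB * σD2) / (φCD * pC * (α - ξB + α * ξB)))
      else
        Real.exp (-(ξD * σD2) / (φCD * pC * (1 - α)))
    (ℙ {ω | ξB ≤ γCB ω ∧ ξD ≤ γSC ω ∧ ξB ≤ γCDC ω ∧ ξD ≤ γCDS ω}).toReal =
        (P1 + P2) * P3 ∧
    1 - (ℙ {ω | ξB ≤ γCB ω ∧ ξD ≤ γSC ω ∧ ξB ≤ γCDC ω ∧ ξD ≤ γCDS ω}).toReal =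
        1 - (P1 + P2) * P3 := by
  intro pS γSC γCB γCDC γCDS P1 P2 P3
  have key : (ℙ {ω | ξB ≤ γCB ω ∧ ξD ≤ γSC ω ∧ ξB ≤ γCDC ω ∧ ξD ≤ γCDS ω}).toReal =
      (P1 + P2) * P3 := by
    -- basic positivity facts
    have hccpos : 0 < β * pC ^ lam + σC2 :=
      add_pos_of_nonneg_of_pos (mul_nonneg hβ (Real.rpow_nonneg hpC.le lam)) hσC
    have hkpos : 0 < α - ξB + α * ξB := by
      have h1 : 0 < 1 + ξB := by linarith
      have h2 : ξB < α * (1 + ξB) := by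
        have := (div_lt_iff₀ h1).mp hα₁; linarith
      nlinarith
    have h1α : 0 < 1 - α := by linarith
    have hr1 : 0 < 1/φSB := by positivity
    have hr2 : 0 < 1/φSC := by positivity
    have hr3 : 0 < 1/φCB := by positivity
    have hr4 : 0 < 1/φCD := by positivity
    have ha : 0 < θ / PS := by positivity
    haveI I1 : IsProbabilityMeasure (expMeasure (1/φSB)) := isProbabilityMeasure_expMeasure hr1
    haveI I2 : IsProbabilityMeasure (expMeasure (1/φSC)) := isProbabilityMeasure_expMeasure hr2
    haveI I3 : IsProbabilityMeasure (expMeasure (1/φCB)) := isProbabilityMeasure_expMeasure hr3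
    haveI I4 : IsProbabilityMeasure (expMeasure (1/φCD)) := isProbabilityMeasure_expMeasure hr4
    -- the event on the product space
    set E' : Set ((ℝ×ℝ)×(ℝ×ℝ)) := {p |
      (ξB ≤ α*pC*p.2.1/(min (θ/p.1.1) PS * p.1.1 + (1-α)*pC*p.2.1 + σB2)) ∧
      (ξD ≤ min (θ/p.1.1) PS * p.1.2 / (β*pC^lam+σC2)) ∧
      (ξB ≤ α*pC*p.2.2/((1-α)*pC*p.2.2+σD2)) ∧
      (ξD ≤ (1-α)*pC*p.2.2/σD2)} with hE'def
    have hg1 : Measurable (fun p : (ℝ×ℝ)×(ℝ×ℝ) =>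
        α*pC*p.2.1/(min (θ/p.1.1) PS * p.1.1 + (1-α)*pC*p.2.1 + σB2)) := by fun_prop
    have hg2 : Measurable (fun p : (ℝ×ℝ)×(ℝ×ℝ) =>
        min (θ/p.1.1) PS * p.1.2 / (β*pC^lam+σC2)) := by fun_prop
    have hg3 : Measurable (fun p : (ℝ×ℝ)×(ℝ×ℝ) =>
        α*pC*p.2.2/((1-α)*pC*p.2.2+σD2)) := by fun_prop
    have hg4 : Measurable (fun p : (ℝ×ℝ)×(ℝ×ℝ) => (1-α)*pC*p.2.2/σD2) := by fun_prop
    have hE'm : MeasurableSet E' :=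
      (measurableSet_le measurable_const hg1).inter
        ((measurableSet_le measurable_const hg2).inter
          ((measurableSet_le measurable_const hg3).inter
            (measurableSet_le measurable_const hg4)))
    have hFmeas : Measurable (fun ω => ((hSB ω, hSC ω), (hCB ω, hCD ω))) :=
      (hmSB.prodMk hmSC).prodMk (hmCB.prodMk hmCD)
    have hmapF : Measure.map (fun ω => ((hSB ω, hSC ω), (hCB ω, hCD ω))) ℙ =
        ((expMeasure (1/φSB)).prod (expMeasure (1/φSC))).prod
          ((expMeasure (1/φCB)).prod (expMeasure (1/φCD))) := by
      have hm : ∀ i, Measurable (![hSB, hSC, hCB, hCD] i) := by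
        intro i; fin_cases i <;> assumption
      have h12 : IndepFun hSB hSC ℙ := hindep.indepFun (show (0:Fin 4) ≠ 1 by decide)
      have h34 : IndepFun hCB hCD ℙ := hindep.indepFun (show (2:Fin 4) ≠ 3 by decide)
      have hpair : IndepFun (fun ω => (hSB ω, hSC ω)) (fun ω => (hCB ω, hCD ω)) ℙ :=
        hindep.indepFun_prodMk_prodMk hm 0 1 2 3 (by decide) (by decide) (by decide) (by decide)
      have hmap12 : Measure.map (fun ω => (hSB ω, hSC ω)) ℙ
          = (expMeasure (1/φSB)).prod (expMeasure (1/φSC)) := by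
        rw [(indepFun_iff_map_prod_eq_prod_map_map hmSB.aemeasurable hmSC.aemeasurable).mp h12,
          hdSB, hdSC]
      have hmap34 : Measure.map (fun ω => (hCB ω, hCD ω)) ℙ
          = (expMeasure (1/φCB)).prod (expMeasure (1/φCD)) := by
        rw [(indepFun_iff_map_prod_eq_prod_map_map hmCB.aemeasurable hmCD.aemeasurable).mp h34,
          hdCB, hdCD]
      rw [(indepFun_iff_map_prod_eq_prod_map_map
          (hmSB.prodMk hmSC).aemeasurable (hmCB.prodMk hmCD).aemeasurable).mp hpair,
        hmap12, hmap34]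
    have hreduce : ℙ {ω | ξB ≤ γCB ω ∧ ξD ≤ γSC ω ∧ ξB ≤ γCDC ω ∧ ξD ≤ γCDS ω} =
        (((expMeasure (1/φSB)).prod (expMeasure (1/φSC))).prod
          ((expMeasure (1/φCB)).prod (expMeasure (1/φCD)))) E' := by
      rw [← hmapF, Measure.map_apply hFmeas hE'm]
      rfl
    -- sets on the factor spaces
    set W1 : Set (ℝ×ℝ) := {q |
      ξB ≤ α*pC*q.2/(min (θ/q.1) PS * q.1 + (1-α)*pC*q.2 + σB2)} with hW1def
    set W2 : Set (ℝ×ℝ) := {q |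
      ξD ≤ min (θ/q.1) PS * q.2 / (β*pC^lam+σC2)} with hW2def
    set S3 : Set ℝ := {w | ξB ≤ α*pC*w/((1-α)*pC*w+σD2) ∧ ξD ≤ (1-α)*pC*w/σD2} with hS3def
    have hW1m : MeasurableSet W1 := measurableSet_le measurable_const (by fun_prop)
    have hW2m : MeasurableSet W2 := measurableSet_le measurable_const (by fun_prop)
    have hg5 : Measurable (fun w : ℝ => α*pC*w/((1-α)*pC*w+σD2)) := by fun_prop
    have hg6 : Measurable (fun w : ℝ => (1-α)*pC*w/σD2) := by fun_prop
    have hS3m : MeasurableSet S3 :=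
      (measurableSet_le measurable_const hg5).inter
        (measurableSet_le measurable_const hg6)
    -- value of the hCD factor
    have hP3pos : 0 < P3 := by
      show 0 < if α ≤ (ξB * ξD + ξB) / (ξB * ξD + ξB + ξD) then
        Real.exp (-(ξB * σD2) / (φCD * pC * (α - ξB + α * ξB)))
      else Real.exp (-(ξD * σD2) / (φCD * pC * (1 - α)))
      split_ifs <;> exact exp_pos _
    have hS3val : expMeasure (1/φCD) S3 = ENNReal.ofReal P3 := by
      have hpk : 0 < pC * (α - ξB + α * ξB) := by positivity
      have hbound : 0 < ξB * ξD + ξB + ξD := by positivity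
      by_cases hcase : α ≤ (ξB * ξD + ξB) / (ξB * ξD + ξB + ξD)
      · have hcase' : α * (ξB * ξD + ξB + ξD) ≤ ξB * ξD + ξB := by
          rw [← le_div_iff₀ hbound]; exact hcase
        have hkξ : ξD * (α - ξB + α * ξB) ≤ ξB * (1 - α) := by
          linarith [hcase', (by ring : ξB*(1-α) - ξD*(α-ξB+α*ξB)
            = (ξB*ξD+ξB) - α*(ξB*ξD+ξB+ξD))]
        have hset : S3 = Ici (ξB * σD2 / (pC * (α - ξB + α * ξB))) := by
          ext w
          simp only [hS3def, mem_setOf_eq, mem_Ici]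
          constructor
          · rintro ⟨h1, h2⟩
            rw [le_div_iff₀ hσD] at h2
            have hw0 : 0 < w := by
              by_contra hng
              push_neg at hng
              nlinarith [mul_pos hξD hσD, mul_nonneg ((mul_pos h1α hpC).le) (neg_nonneg.2 hng),
                (by ring : (1-α)*pC*(-w) = -((1-α)*pC*w))]
            have hD : 0 < (1-α)*pC*w + σD2 := by positivity
            rw [le_div_iff₀ hD] at h1
            rw [div_le_iff₀ hpk]
            nlinarith
          · intro h
            have ht0 : 0 < ξB * σD2 / (pC * (α - ξB + α * ξB)) := by positivity
            have hw0 : 0 < w := lt_of_lt_of_le ht0 h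
            have hD : 0 < (1-α)*pC*w + σD2 := by positivity
            rw [div_le_iff₀ hpk] at h
            constructor
            · rw [le_div_iff₀ hD]; nlinarith
            · rw [le_div_iff₀ hσD]; nlinarith [mul_le_mul_of_nonneg_left h hξD.le]
        rw [hset, expMeasure_Ici _ _ hr4 (by positivity)]
        refine congrArg ENNReal.ofReal ?_
        · show rexp _ = if α ≤ (ξB * ξD + ξB) / (ξB * ξD + ξB + ξD) then
            Real.exp (-(ξB * σD2) / (φCD * pC * (α - ξB + α * ξB)))
          else Real.exp (-(ξD * σD2) / (φCD * pC * (1 - α)))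
          rw [if_pos hcase]
          congr 1
          field_simp
      · have hcase' : ξB * ξD + ξB < α * (ξB * ξD + ξB + ξD) := by
          rw [← div_lt_iff₀ hbound]; exact lt_of_not_ge hcase
        have hkξ : ξB * (1 - α) ≤ ξD * (α - ξB + α * ξB) := by
          linarith [hcase', (by ring : ξB*(1-α) - ξD*(α-ξB+α*ξB)
            = (ξB*ξD+ξB) - α*(ξB*ξD+ξB+ξD))]
        have hp1α : 0 < (1-α)*pC := by positivity
        have hset : S3 = Ici (ξD * σD2 / ((1-α) * pC)) := by
          ext w
          simp only [hS3def, mem_setOf_eq, mem_Ici]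
          constructor
          · rintro ⟨h1, h2⟩
            rw [le_div_iff₀ hσD] at h2
            rw [div_le_iff₀ hp1α]
            nlinarith
          · intro h
            have ht0 : 0 < ξD * σD2 / ((1-α)*pC) := by positivity
            have hw0 : 0 < w := lt_of_lt_of_le ht0 h
            have hD : 0 < (1-α)*pC*w + σD2 := by positivity
            rw [div_le_iff₀ hp1α] at h
            constructor
            · rw [le_div_iff₀ hD]
              nlinarith [mul_le_mul_of_nonneg_left h hξB.le, mul_pos (mul_pos hpC hw0) hξD]
            · rw [le_div_iff₀ hσD]; nlinarith
        rw [hset, expMeasure_Ici _ _ hr4 (by positivity)]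
        refine congrArg ENNReal.ofReal ?_
        · show rexp _ = if α ≤ (ξB * ξD + ξB) / (ξB * ξD + ξB + ξD) then
            Real.exp (-(ξB * σD2) / (φCD * pC * (α - ξB + α * ξB)))
          else Real.exp (-(ξD * σD2) / (φCD * pC * (1 - α)))
          rw [if_neg hcase]
          congr 1
          field_simp
    -- reduce the product measure of E' to a single integral
    have hstep : (((expMeasure (1/φSB)).prod (expMeasure (1/φSC))).prod
          ((expMeasure (1/φCB)).prod (expMeasure (1/φCD)))) E' =
        ∫⁻ x, (expMeasure (1/φCB) (Prod.mk x ⁻¹' W1) * ENNReal.ofReal P3) *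
          expMeasure (1/φSC) (Prod.mk x ⁻¹' W2) ∂(expMeasure (1/φSB)) := by
      rw [Measure.prod_apply hE'm]
      have hptwise : ∀ p : ℝ×ℝ, ((expMeasure (1/φCB)).prod (expMeasure (1/φCD)))
          (Prod.mk p ⁻¹' E') =
          W2.indicator (fun p => expMeasure (1/φCB) (Prod.mk p.1 ⁻¹' W1)
            * expMeasure (1/φCD) S3) p := by
        intro p
        by_cases hp : p ∈ W2
        · rw [indicator_of_mem hp]
          have hpE : Prod.mk p ⁻¹' E' = (Prod.mk p.1 ⁻¹' W1) ×ˢ S3 := by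
            ext q
            simp only [hE'def, hW1def, hS3def, mem_preimage, mem_prod, mem_setOf_eq]
            have hp2 : ξD ≤ min (θ/p.1) PS * p.2 / (β*pC^lam+σC2) := hp
            tauto
          rw [hpE, Measure.prod_prod]
        · rw [indicator_of_notMem hp]
          have hpE : Prod.mk p ⁻¹' E' = ∅ := by
            ext q
            simp only [hE'def, mem_preimage, mem_setOf_eq, mem_empty_iff_false, iff_false]
            intro hq
            exact hp hq.2.1
          rw [hpE, measure_empty]
      rw [lintegral_congr hptwise]
      have hFm : Measurable (fun p : ℝ×ℝ => W2.indicator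
          (fun p => expMeasure (1/φCB) (Prod.mk p.1 ⁻¹' W1) * expMeasure (1/φCD) S3) p) := by
        exact (((measurable_measure_prodMk_left hW1m).comp measurable_fst).mul_const
          _).indicator hW2m
      rw [lintegral_prod _ hFm.aemeasurable]
      refine lintegral_congr fun x => ?_
      have hyeq : ∀ y : ℝ, W2.indicator
          (fun p => expMeasure (1/φCB) (Prod.mk p.1 ⁻¹' W1) * expMeasure (1/φCD) S3) (x, y) =
          (Prod.mk x ⁻¹' W2).indicator
            (fun _ => expMeasure (1/φCB) (Prod.mk x ⁻¹' W1) * expMeasure (1/φCD) S3) y := by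
        intro y
        by_cases hy : (x, y) ∈ W2
        · rw [indicator_of_mem hy, indicator_of_mem (mem_preimage.mpr hy)]
        · rw [indicator_of_notMem hy,
            indicator_of_notMem (fun hc => hy (mem_preimage.mp hc))]
      have hsetx : MeasurableSet (Prod.mk x ⁻¹' W2) := measurable_prodMk_left hW2m
      rw [lintegral_congr hyeq, lintegral_indicator hsetx _, setLIntegral_const, hS3val]
    -- nonvanishing denominators
    have hφSB' : φSB ≠ 0 := ne_of_gt hφSB
    have hφSC' : φSC ≠ 0 := ne_of_gt hφSC
    have hφCB' : φCB ≠ 0 := ne_of_gt hφCB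
    have hpk0 : pC * (α - ξB + α * ξB) ≠ 0 := by positivity
    have hPS' : PS ≠ 0 := ne_of_gt hPS
    have hθ' : θ ≠ 0 := ne_of_gt hθ
    have hC2pos : 0 < 1/φSB + (1/φCB)*(ξB*PS/(pC*(α-ξB+α*ξB))) := by positivity
    have hC1pos : 0 < 1/φSB + (1/φSC)*(ξD*(β*pC^lam+σC2)/θ) := by positivity
    have hK2nn : 0 ≤ (1/φSB) * ((Real.exp (-((1/φCB) * (ξB*σB2/(pC*(α-ξB+α*ξB))))) * P3)
        * Real.exp (-((1/φSC) * (ξD*(β*pC^lam+σC2)/PS)))) :=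
      mul_nonneg (by positivity) (mul_nonneg (mul_nonneg (exp_pos _).le hP3pos.le) (exp_pos _).le)
    have hK1nn : 0 ≤ (1/φSB) * (Real.exp (-((1/φCB) * (ξB*(θ+σB2)/(pC*(α-ξB+α*ξB))))) * P3) :=
      mul_nonneg (by positivity) (mul_nonneg (exp_pos _).le hP3pos.le)
    -- pointwise formula on Ioc 0 (θ/PS)
    have hptIoc : ∀ x ∈ Ioc (0:ℝ) (θ/PS), exponentialPDF (1/φSB) x *
        ((expMeasure (1/φCB) (Prod.mk x ⁻¹' W1) * ENNReal.ofReal P3) *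
          expMeasure (1/φSC) (Prod.mk x ⁻¹' W2)) =
        ENNReal.ofReal (((1/φSB) * ((Real.exp (-((1/φCB) * (ξB*σB2/(pC*(α-ξB+α*ξB))))) * P3)
          * Real.exp (-((1/φSC) * (ξD*(β*pC^lam+σC2)/PS))))) *
          Real.exp (-((1/φSB + (1/φCB)*(ξB*PS/(pC*(α-ξB+α*ξB)))) * x))) := by
      rintro x ⟨hx0, hxa⟩
      have hminx : min (θ/x) PS = PS := by
        apply min_eq_right
        rw [le_div_iff₀ hx0]
        have := (le_div_iff₀ hPS).mp hxa
        linarith [(by ring : PS*x = x*PS)]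
      have hab : 0 < α*pC - ξB*((1-α)*pC) := by
        rw [show α*pC - ξB*((1-α)*pC) = pC*(α-ξB+α*ξB) from by ring]; positivity
      have hW1x : expMeasure (1/φCB) (Prod.mk x ⁻¹' W1) =
          ENNReal.ofReal (Real.exp (-((1/φCB) * (ξB*(PS*x+σB2)/(pC*(α-ξB+α*ξB)))))) := by
        have hpre : Prod.mk x ⁻¹' W1 =
            {z : ℝ | ξB ≤ (α*pC)*z/((PS*x) + ((1-α)*pC)*z + σB2)} := by
          ext z
          simp only [hW1def, mem_preimage, mem_setOf_eq, hminx]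
        have hset := tail_set (α*pC) ((1-α)*pC) σB2 (PS*x) ξB
          (by positivity) hσB hξB hab (by positivity)
        have ht : ξB*((PS*x) + σB2)/(α*pC - ξB*((1-α)*pC))
            = ξB*(PS*x+σB2)/(pC*(α-ξB+α*ξB)) := by
          rw [show α*pC - ξB*((1-α)*pC) = pC*(α-ξB+α*ξB) from by ring]
        rw [hpre, expMeasure_eq_of_inter hr3 (by positivity) (ht ▸ hset)]
      have hW2x : expMeasure (1/φSC) (Prod.mk x ⁻¹' W2) =
          ENNReal.ofReal (Real.exp (-((1/φSC) * (ξD*(β*pC^lam+σC2)/PS)))) := by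
        have hpre : Prod.mk x ⁻¹' W2 = Ici (ξD*(β*pC^lam+σC2)/PS) := by
          ext y
          simp only [hW2def, mem_preimage, mem_setOf_eq, hminx, mem_Ici]
          rw [le_div_iff₀ hccpos, div_le_iff₀ hPS, mul_comm PS y]
        rw [hpre, expMeasure_Ici _ _ hr2 (by positivity)]
      rw [hW1x, hW2x, exponentialPDF_of_nonneg hx0.le,
        ← ENNReal.ofReal_mul (exp_pos _).le,
        ← ENNReal.ofReal_mul (mul_nonneg (exp_pos _).le hP3pos.le),
        ← ENNReal.ofReal_mul (by positivity)]
      congr 1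
      have hexp : (-(1/φSB*x)) + (-((1/φCB) * (ξB*(PS*x+σB2)/(pC*(α-ξB+α*ξB)))))
          + (-((1/φSC) * (ξD*(β*pC^lam+σC2)/PS)))
          = (-((1/φCB) * (ξB*σB2/(pC*(α-ξB+α*ξB))))) + (-((1/φSC) * (ξD*(β*pC^lam+σC2)/PS)))
            + (-((1/φSB + (1/φCB)*(ξB*PS/(pC*(α-ξB+α*ξB)))) * x)) := by
        field_simp
        try ring
      calc 1/φSB * Real.exp (-(1/φSB*x)) * (Real.exp (-((1/φCB) *
            (ξB*(PS*x+σB2)/(pC*(α-ξB+α*ξB))))) * P3 * Real.exp (-((1/φSC) *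
            (ξD*(β*pC^lam+σC2)/PS))))
          = (1/φSB * P3) * Real.exp ((-(1/φSB*x)) + (-((1/φCB) *
              (ξB*(PS*x+σB2)/(pC*(α-ξB+α*ξB))))) + (-((1/φSC) *
              (ξD*(β*pC^lam+σC2)/PS)))) := by
            rw [exp_add, exp_add]; ring
        _ = (1/φSB * P3) * Real.exp ((-((1/φCB) * (ξB*σB2/(pC*(α-ξB+α*ξB)))))
              + (-((1/φSC) * (ξD*(β*pC^lam+σC2)/PS)))
              + (-((1/φSB + (1/φCB)*(ξB*PS/(pC*(α-ξB+α*ξB)))) * x))) := by rw [hexp]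
        _ = _ := by rw [exp_add, exp_add]; ring
    -- pointwise formula on Ioi (θ/PS)
    have hptIoi : ∀ x ∈ Ioi (θ/PS), exponentialPDF (1/φSB) x *
        ((expMeasure (1/φCB) (Prod.mk x ⁻¹' W1) * ENNReal.ofReal P3) *
          expMeasure (1/φSC) (Prod.mk x ⁻¹' W2)) =
        ENNReal.ofReal (((1/φSB) * (Real.exp (-((1/φCB) * (ξB*(θ+σB2)/(pC*(α-ξB+α*ξB))))) * P3))
          * Real.exp (-((1/φSB + (1/φSC)*(ξD*(β*pC^lam+σC2)/θ)) * x))) := by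
      intro x hx
      have hx0 : 0 < x := lt_trans ha hx
      have hminx : min (θ/x) PS = θ/x := by
        apply min_eq_left
        rw [div_le_iff₀ hx0]
        have := (div_lt_iff₀ hPS).mp hx
        linarith [(by ring : PS*x = x*PS)]
      have hmx : min (θ/x) PS * x = θ := by
        rw [hminx, div_mul_cancel₀ _ (ne_of_gt hx0)]
      have hab : 0 < α*pC - ξB*((1-α)*pC) := by
        rw [show α*pC - ξB*((1-α)*pC) = pC*(α-ξB+α*ξB) from by ring]; positivity
      have hW1x : expMeasure (1/φCB) (Prod.mk x ⁻¹' W1) =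
          ENNReal.ofReal (Real.exp (-((1/φCB) * (ξB*(θ+σB2)/(pC*(α-ξB+α*ξB)))))) := by
        have hpre : Prod.mk x ⁻¹' W1 =
            {z : ℝ | ξB ≤ (α*pC)*z/(θ + ((1-α)*pC)*z + σB2)} := by
          ext z
          simp only [hW1def, mem_preimage, mem_setOf_eq, hmx]
        have hset := tail_set (α*pC) ((1-α)*pC) σB2 θ ξB hθ.le hσB hξB hab (by positivity)
        have ht : ξB*(θ + σB2)/(α*pC - ξB*((1-α)*pC))
            = ξB*(θ+σB2)/(pC*(α-ξB+α*ξB)) := by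
          rw [show α*pC - ξB*((1-α)*pC) = pC*(α-ξB+α*ξB) from by ring]
        rw [hpre, expMeasure_eq_of_inter hr3 (by positivity) (ht ▸ hset)]
      have hW2x : expMeasure (1/φSC) (Prod.mk x ⁻¹' W2) =
          ENNReal.ofReal (Real.exp (-((1/φSC) * (ξD*(β*pC^lam+σC2)/θ*x)))) := by
        have hpre : Prod.mk x ⁻¹' W2 = Ici (ξD*(β*pC^lam+σC2)/θ*x) := by
          ext y
          simp only [hW2def, mem_preimage, mem_setOf_eq, hminx, mem_Ici]
          rw [div_mul_eq_mul_div, div_div, le_div_iff₀ (by positivity : (0:ℝ) < x*(β*pC^lam+σC2))]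
          constructor
          · intro h
            rw [div_mul_eq_mul_div, div_le_iff₀ hθ]
            nlinarith
          · intro h
            rw [div_mul_eq_mul_div, div_le_iff₀ hθ] at h
            nlinarith
        rw [hpre, expMeasure_Ici _ _ hr2 (by positivity)]
      rw [hW1x, hW2x, exponentialPDF_of_nonneg hx0.le,
        ← ENNReal.ofReal_mul (exp_pos _).le,
        ← ENNReal.ofReal_mul (mul_nonneg (exp_pos _).le hP3pos.le),
        ← ENNReal.ofReal_mul (by positivity)]
      congr 1
      have hexp : (-(1/φSB*x)) + (-((1/φCB) * (ξB*(θ+σB2)/(pC*(α-ξB+α*ξB)))))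
          + (-((1/φSC) * (ξD*(β*pC^lam+σC2)/θ*x)))
          = (-((1/φCB) * (ξB*(θ+σB2)/(pC*(α-ξB+α*ξB)))))
            + (-((1/φSB + (1/φSC)*(ξD*(β*pC^lam+σC2)/θ)) * x)) := by
        field_simp
        try ring
      calc 1/φSB * Real.exp (-(1/φSB*x)) * (Real.exp (-((1/φCB) *
            (ξB*(θ+σB2)/(pC*(α-ξB+α*ξB))))) * P3 * Real.exp (-((1/φSC) *
            (ξD*(β*pC^lam+σC2)/θ*x))))
          = (1/φSB * P3) * Real.exp ((-(1/φSB*x)) + (-((1/φCB) *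
              (ξB*(θ+σB2)/(pC*(α-ξB+α*ξB))))) + (-((1/φSC) *
              (ξD*(β*pC^lam+σC2)/θ*x)))) := by
            rw [exp_add, exp_add]; ring
        _ = (1/φSB * P3) * Real.exp ((-((1/φCB) * (ξB*(θ+σB2)/(pC*(α-ξB+α*ξB)))))
              + (-((1/φSB + (1/φSC)*(ξD*(β*pC^lam+σC2)/θ)) * x))) := by rw [hexp]
        _ = _ := by rw [exp_add]; ring
    -- assemble the integral
    have hGm : Measurable (fun x : ℝ =>
        (expMeasure (1/φCB) (Prod.mk x ⁻¹' W1) * ENNReal.ofReal P3) *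
          expMeasure (1/φSC) (Prod.mk x ⁻¹' W2)) :=
      ((measurable_measure_prodMk_left hW1m).mul_const _).mul
        (measurable_measure_prodMk_left hW2m)
    have hpdfm : Measurable (exponentialPDF (1/φSB)) :=
      (measurable_exponentialPDFReal _).ennreal_ofReal
    have hint : (((expMeasure (1/φSB)).prod (expMeasure (1/φSC))).prod
          ((expMeasure (1/φCB)).prod (expMeasure (1/φCD)))) E' =
        ENNReal.ofReal (((1/φSB) * ((Real.exp (-((1/φCB) * (ξB*σB2/(pC*(α-ξB+α*ξB))))) * P3)
          * Real.exp (-((1/φSC) * (ξD*(β*pC^lam+σC2)/PS))))) *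
          ((1 - Real.exp (-((1/φSB + (1/φCB)*(ξB*PS/(pC*(α-ξB+α*ξB)))) * (θ/PS))))
            / (1/φSB + (1/φCB)*(ξB*PS/(pC*(α-ξB+α*ξB)))))) +
        ENNReal.ofReal (((1/φSB) * (Real.exp (-((1/φCB) * (ξB*(θ+σB2)/(pC*(α-ξB+α*ξB))))) * P3))
          * (Real.exp (-((1/φSB + (1/φSC)*(ξD*(β*pC^lam+σC2)/θ)) * (θ/PS)))
            / (1/φSB + (1/φSC)*(ξD*(β*pC^lam+σC2)/θ)))) := by
      rw [hstep, show expMeasure (1/φSB) = volume.withDensity (exponentialPDF (1/φSB)) from rfl,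
        lintegral_withDensity_eq_lintegral_mul _ hpdfm hGm]
      simp only [Pi.mul_apply]
      rw [← lintegral_add_compl (fun x => exponentialPDF (1/φSB) x *
        ((expMeasure (1/φCB) (Prod.mk x ⁻¹' W1) * ENNReal.ofReal P3) *
          expMeasure (1/φSC) (Prod.mk x ⁻¹' W2))) (measurableSet_Iio (a := (0:ℝ)))]
      have hzero : (∫⁻ x in Iio (0:ℝ), exponentialPDF (1/φSB) x *
          ((expMeasure (1/φCB) (Prod.mk x ⁻¹' W1) * ENNReal.ofReal P3) *
            expMeasure (1/φSC) (Prod.mk x ⁻¹' W2)) ∂volume) = 0 := by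
        rw [setLIntegral_congr_fun measurableSet_Iio
          (fun x (hx : x < 0) => by rw [exponentialPDF_of_neg hx, zero_mul]),
          lintegral_zero]
      rw [hzero, zero_add, compl_Iio,
        setLIntegral_congr (Ioi_ae_eq_Ici (a := (0:ℝ))).symm,
        ← Ioc_union_Ioi_eq_Ioi ha.le,
        lintegral_union measurableSet_Ioi (Ioc_disjoint_Ioi le_rfl),
        setLIntegral_congr_fun measurableSet_Ioc hptIoc,
        setLIntegral_congr_fun measurableSet_Ioi hptIoi,
        mylint_Ioc _ _ _ hC2pos hK2nn ha.le,
        mylint_Ioi _ _ _ hC1pos hK1nn]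
    -- final real computation
    have hfac2 : 0 ≤ (1 - Real.exp (-((1/φSB + (1/φCB)*(ξB*PS/(pC*(α-ξB+α*ξB)))) * (θ/PS))))
        / (1/φSB + (1/φCB)*(ξB*PS/(pC*(α-ξB+α*ξB)))) := by
      apply div_nonneg _ hC2pos.le
      rw [sub_nonneg, Real.exp_le_one_iff]
      rw [neg_nonpos]
      positivity
    have hfac1 : 0 ≤ Real.exp (-((1/φSB + (1/φSC)*(ξD*(β*pC^lam+σC2)/θ)) * (θ/PS)))
        / (1/φSB + (1/φSC)*(ξD*(β*pC^lam+σC2)/θ)) := by positivity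
    rw [hreduce, hint, ← ENNReal.ofReal_add
      (mul_nonneg hK2nn hfac2) (mul_nonneg hK1nn hfac1),
      ENNReal.toReal_ofReal (add_nonneg (mul_nonneg hK2nn hfac2)
        (mul_nonneg hK1nn hfac1))]
    have hP1e : ((1/φSB) * (Real.exp (-((1/φCB) * (ξB*(θ+σB2)/(pC*(α-ξB+α*ξB))))) * P3))
        * (Real.exp (-((1/φSB + (1/φSC)*(ξD*(β*pC^lam+σC2)/θ)) * (θ/PS)))
          / (1/φSB + (1/φSC)*(ξD*(β*pC^lam+σC2)/θ))) = P1 * P3 := by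
      show _ = (φSC * θ / (φSB * ξD * (β * pC ^ lam + σC2) + φSC * θ) *
        Real.exp (-(θ / PS) * (ξD * (β * pC ^ lam + σC2) / (φSC * θ) + 1 / φSB)) *
        Real.exp (-(ξB * (θ + σB2)) / (φCB * pC * (α - ξB + α * ξB)))) * P3
      have hA : -((1/φCB) * (ξB*(θ+σB2)/(pC*(α-ξB+α*ξB))))
          = -(ξB * (θ + σB2)) / (φCB * pC * (α - ξB + α * ξB)) := by
        field_simp
        try ring
      have hC : -((1/φSB + (1/φSC)*(ξD*(β*pC^lam+σC2)/θ)) * (θ/PS))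
          = -(θ / PS) * (ξD * (β * pC ^ lam + σC2) / (φSC * θ) + 1 / φSB) := by
        field_simp
        try ring
      have hpref : (1/φSB)/(1/φSB + (1/φSC)*(ξD*(β*pC^lam+σC2)/θ))
          = φSC * θ / (φSB * ξD * (β * pC ^ lam + σC2) + φSC * θ) := by
        rw [div_eq_div_iff hC1pos.ne' (by positivity : (0:ℝ) < φSB * ξD * (β * pC ^ lam + σC2) + φSC * θ).ne']
        field_simp
        try ring
      calc ((1/φSB) * (Real.exp (-((1/φCB) * (ξB*(θ+σB2)/(pC*(α-ξB+α*ξB))))) * P3))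
            * (Real.exp (-((1/φSB + (1/φSC)*(ξD*(β*pC^lam+σC2)/θ)) * (θ/PS)))
              / (1/φSB + (1/φSC)*(ξD*(β*pC^lam+σC2)/θ)))
          = ((1/φSB)/(1/φSB + (1/φSC)*(ξD*(β*pC^lam+σC2)/θ)))
            * Real.exp (-((1/φCB) * (ξB*(θ+σB2)/(pC*(α-ξB+α*ξB)))))
            * Real.exp (-((1/φSB + (1/φSC)*(ξD*(β*pC^lam+σC2)/θ)) * (θ/PS))) * P3 := by
            ring
        _ = _ := by rw [hpref, hA, hC]; try ring
    have hP2e : ((1/φSB) * ((Real.exp (-((1/φCB) * (ξB*σB2/(pC*(α-ξB+α*ξB))))) * P3)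
          * Real.exp (-((1/φSC) * (ξD*(β*pC^lam+σC2)/PS))))) *
          ((1 - Real.exp (-((1/φSB + (1/φCB)*(ξB*PS/(pC*(α-ξB+α*ξB)))) * (θ/PS))))
            / (1/φSB + (1/φCB)*(ξB*PS/(pC*(α-ξB+α*ξB))))) = P2 * P3 := by
      show _ = (φCB * pC * (α - ξB + α * ξB) /
          (φSB * ξB * PS + φCB * pC * (α - ξB + α * ξB)) *
        Real.exp (-(ξD * (β * pC ^ lam + σC2)) / (φSC * PS)
          - ξB * σB2 / (φCB * pC * (α - ξB + α * ξB))) *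
        (1 - Real.exp (-(θ / PS) *
          (ξB * PS / (φCB * pC * (α - ξB + α * ξB)) + 1 / φSB)))) * P3
      have hcomb : Real.exp (-((1/φCB) * (ξB*σB2/(pC*(α-ξB+α*ξB)))))
            * Real.exp (-((1/φSC) * (ξD*(β*pC^lam+σC2)/PS)))
          = Real.exp (-(ξD * (β * pC ^ lam + σC2)) / (φSC * PS)
            - ξB * σB2 / (φCB * pC * (α - ξB + α * ξB))) := by
        rw [← exp_add]
        congr 1
        field_simp
        try ring
      have hC : -((1/φSB + (1/φCB)*(ξB*PS/(pC*(α-ξB+α*ξB)))) * (θ/PS))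
          = -(θ / PS) * (ξB * PS / (φCB * pC * (α - ξB + α * ξB)) + 1 / φSB) := by
        field_simp
        try ring
      have hpref : (1/φSB)/(1/φSB + (1/φCB)*(ξB*PS/(pC*(α-ξB+α*ξB))))
          = φCB * pC * (α - ξB + α * ξB) /
            (φSB * ξB * PS + φCB * pC * (α - ξB + α * ξB)) := by
        rw [div_eq_div_iff hC2pos.ne' (by positivity : (0:ℝ) < φSB * ξB * PS + φCB * pC * (α - ξB + α * ξB)).ne']
        generalize α - ξB + α * ξB = k at hkpos ⊢
        have hk0 := hkpos.ne'
        field_simp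
        try ring
      calc ((1/φSB) * ((Real.exp (-((1/φCB) * (ξB*σB2/(pC*(α-ξB+α*ξB))))) * P3)
            * Real.exp (-((1/φSC) * (ξD*(β*pC^lam+σC2)/PS))))) *
            ((1 - Real.exp (-((1/φSB + (1/φCB)*(ξB*PS/(pC*(α-ξB+α*ξB)))) * (θ/PS))))
              / (1/φSB + (1/φCB)*(ξB*PS/(pC*(α-ξB+α*ξB)))))
          = ((1/φSB)/(1/φSB + (1/φCB)*(ξB*PS/(pC*(α-ξB+α*ξB)))))
            * (Real.exp (-((1/φCB) * (ξB*σB2/(pC*(α-ξB+α*ξB)))))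
              * Real.exp (-((1/φSC) * (ξD*(β*pC^lam+σC2)/PS))))
            * (1 - Real.exp (-((1/φSB + (1/φCB)*(ξB*PS/(pC*(α-ξB+α*ξB)))) * (θ/PS)))) * P3 := by
            ring
        _ = _ := by rw [hpref, hcomb, hC]; try ring
    linear_combination hP2e + hP1e
  exact ⟨key, by rw [key]⟩
end

section
/- Fix θ, P_S, σ_B², σ_C², σ_D², φ_SB, φ_SC, φ_CB, φ_CD > 0, β > 0, λ ∈ (0,1], ξ_B > 0, ξ_D > 0, and α with ξ_B/(1+ξ_B) < α < 1. Define P_out(p_C) = 1 − (P₁(p_C) + P₂(p_C))·P₃(p_C), where P₁(p_C) = [φ_SC·θ/(φ_SB·ξ_D·(β·p_C^λ + σ_C²) + φ_SC·θ)]·exp(−(θ/P_S)·(ξ_D·(β·p_C^λ + σ_C²)/(φ_SC·θ) + 1/φ_SB))·exp(−ξ_B·(θ + σ_B²)/(φ_CB·p_C·(α − ξ_B + α·ξ_B))), P₂(p_C) = [φ_CB·p_C·(α − ξ_B + α·ξ_B)/(φ_SB·ξ_B·P_S + φ_CB·p_C·(α − ξ_B + α·ξ_B))]·exp(−ξ_D·(β·p_C^λ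 + σ_C²)/(φ_SC·P_S) − ξ_B·σ_B²/(φ_CB·p_C·(α − ξ_B + α·ξ_B)))·(1 − exp(−(θ/P_S)·(ξ_B·P_S/(φ_CB·p_C·(α − ξ_B + α·ξ_B)) + 1/φ_SB))), and P₃(p_C) = exp(−ξ_B·σ_D²/(φ_CD·p_C·(α − ξ_B + α·ξ_B))) if α ≤ (ξ_B·ξ_D + ξ_B)/(ξ_B·ξ_D + ξ_B + ξ_D) and P₃(p_C) = exp(−ξ_D·σ_D²/(φ_CD·p_C·(1 − α))) otherwise. Then P_out(p_C) → 1 as p_C → +∞. -/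
/-!
The residual self-interference `β * p_C ^ λ + σ_C²` tends to infinity with `p_C`, and both `P₁`
and `P₂` carry a factor that it drives to `0`, while every other factor converges. In particular
each `c / (a * p_C * b)` tends to `0` whatever the signs of the constants, so `P₃ → 1`. Hence
`(P₁ + P₂) * P₃ → 0`.
-/

open Real Filter Topology

theorem tendsto_const_div_mul_mul_atTop (c a b : ℝ) :
    Tendsto (fun x : ℝ => c / (a * x * b)) atTop (𝓝 0) := by
  have h := (tendsto_inv_atTop_zero (𝕜 := ℝ)).const_mul (c / (a * b))
  rw [mul_zero] at h
  exact h.congr fun x => by ring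

theorem tendsto_exp_const_div_mul_mul_atTop (c a b : ℝ) :
    Tendsto (fun x : ℝ => exp (c / (a * x * b))) atTop (𝓝 1) := by
  simpa using (tendsto_const_div_mul_mul_atTop c a b).rexp

section

variable {ι : Type*} {l : Filter ι}

theorem Filter.Tendsto.div_const_add_self {f : ι → ℝ}
    (hf : Tendsto f l atTop) (c : ℝ) : Tendsto (fun x => f x / (c + f x)) l (𝓝 1) := by
  have h := tendsto_const_nhds (x := (1 : ℝ)).sub
    (tendsto_const_nhds (x := c).div_atTop (tendsto_atTop_add_const_left _ c hf))
  rw [sub_zero] at h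
  refine h.congr' ?_
  filter_upwards [hf.eventually_gt_atTop (-c)] with x hx
  field_simp [show c + f x ≠ 0 by linarith]
  ring

theorem tendsto_exp_neg_mul_div_add_atTop {y : ι → ℝ}
    (hy : Tendsto y l atTop) {a c d : ℝ} (ha : 0 < a) (hc : 0 < c) (hd : 0 < d) (e : ℝ) :
    Tendsto (fun x => exp (-d * (a * y x / c + e))) l (𝓝 0) :=
  tendsto_exp_atBot.comp <| (tendsto_atTop_add_const_right _ e
    ((hy.const_mul_atTop ha).atTop_div_const hc)).const_mul_atTop_of_neg (neg_neg_of_pos hd)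

theorem tendsto_exp_neg_mul_div_sub_atTop {y g : ι → ℝ}
    (hy : Tendsto y l atTop) {a c b : ℝ} (ha : 0 < a) (hc : 0 < c) (hg : Tendsto g l (𝓝 b)) :
    Tendsto (fun x => exp (-(a * y x) / c - g x)) l (𝓝 0) := by
  refine tendsto_exp_atBot.comp <| ((tendsto_neg_atTop_atBot.comp
    (hy.const_mul_atTop ha)).atBot_div_const hc).atBot_add hg.neg |>.congr fun x => ?_
  simp only [Function.comp_apply, sub_eq_add_neg]

end

theorem outage_floor_tendsto_one_general
    (θ PS σB2 σC2 σD2 φSB φSC φCB φCD β lam ξB ξD α : ℝ)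
    (hθ : 0 < θ) (hPS : 0 < PS)
    (hφSB : 0 < φSB) (hφSC : 0 < φSC) (hφCB : 0 < φCB)
    (hβ : 0 < β) (hlam : lam ∈ Set.Ioc (0 : ℝ) 1)
    (hξB : 0 < ξB) (hξD : 0 < ξD)
    (hα₁ : ξB / (1 + ξB) < α) :
    let P1 : ℝ → ℝ := fun pC =>
      φSC * θ / (φSB * ξD * (β * pC ^ lam + σC2) + φSC * θ) *
        Real.exp (-(θ / PS) * (ξD * (β * pC ^ lam + σC2) / (φSC * θ) + 1 / φSB)) *
        Real.exp (-(ξB * (θ + σB2)) / (φCB * pC * (α - ξB + α * ξB)))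
    let P2 : ℝ → ℝ := fun pC =>
      φCB * pC * (α - ξB + α * ξB) /
          (φSB * ξB * PS + φCB * pC * (α - ξB + α * ξB)) *
        Real.exp (-(ξD * (β * pC ^ lam + σC2)) / (φSC * PS)
          - ξB * σB2 / (φCB * pC * (α - ξB + α * ξB))) *
        (1 - Real.exp (-(θ / PS) *
          (ξB * PS / (φCB * pC * (α - ξB + α * ξB)) + 1 / φSB)))
    let P3 : ℝ → ℝ := fun pC =>
      if α ≤ (ξB * ξD + ξB) / (ξB * ξD + ξB + ξD) then
        Real.exp (-(ξB * σD2) / (φCD * pC * (α - ξB + α * ξB)))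
      else
        Real.exp (-(ξD * σD2) / (φCD * pC * (1 - α)))
    Tendsto (fun pC => 1 - (P1 pC + P2 pC) * P3 pC) atTop (nhds 1) := by
  intro P1 P2 P3
  have hk : 0 < α - ξB + α * ξB := by
    have := (div_lt_iff₀ (by linarith : (0:ℝ) < 1 + ξB)).mp hα₁
    linarith
  have hSI : Tendsto (fun pC : ℝ => β * pC ^ lam + σC2) atTop atTop :=
    tendsto_atTop_add_const_right _ _ ((tendsto_rpow_atTop hlam.1).const_mul_atTop hβ)
  have hP1 : Tendsto P1 atTop (𝓝 (0 * 0 * 1)) :=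
    ((tendsto_const_nhds.div_atTop
      (tendsto_atTop_add_const_right _ _ (hSI.const_mul_atTop (mul_pos hφSB hξD)))).mul
      (tendsto_exp_neg_mul_div_add_atTop hSI hξD (mul_pos hφSC hθ) (div_pos hθ hPS) _)).mul
      (tendsto_exp_const_div_mul_mul_atTop _ _ _)
  have hP2 : Tendsto P2 atTop (𝓝 (1 * 0 * _)) :=
    ((((tendsto_id.const_mul_atTop hφCB).atTop_mul_const hk).div_const_add_self _).mul
      (tendsto_exp_neg_mul_div_sub_atTop hSI hξD (mul_pos hφSC hPS)
        (tendsto_const_div_mul_mul_atTop _ _ _))).mul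
      ((((tendsto_const_div_mul_mul_atTop _ _ _).add_const _).const_mul _).rexp.const_sub 1)
  have hP3 : Tendsto P3 atTop (𝓝 1) := by
    by_cases hc : α ≤ (ξB * ξD + ξB) / (ξB * ξD + ξB + ξD)
    · simpa only [P3, hc, if_true] using tendsto_exp_const_div_mul_mul_atTop _ _ _
    · simpa only [P3, hc, if_false] using tendsto_exp_const_div_mul_mul_atTop _ _ _
  simpa using tendsto_const_nhds.sub ((hP1.add hP2).mul hP3)

/-- Corollary 1, case `λ > 0`: the exact joint outage probability tends
to `1` as the relay transmit power `p_C` tends to infinity. -/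
theorem outage_floor_tendsto_one
    (θ PS σB2 σC2 σD2 φSB φSC φCB φCD β lam ξB ξD α : ℝ)
    (hθ : 0 < θ) (hPS : 0 < PS) (hσB : 0 < σB2) (hσC : 0 < σC2) (hσD : 0 < σD2)
    (hφSB : 0 < φSB) (hφSC : 0 < φSC) (hφCB : 0 < φCB) (hφCD : 0 < φCD)
    (hβ : 0 < β) (hlam : lam ∈ Set.Ioc (0 : ℝ) 1)
    (hξB : 0 < ξB) (hξD : 0 < ξD)
    (hα₁ : ξB / (1 + ξB) < α) (hα₂ : α < 1) :
    let P1 : ℝ → ℝ := fun pC =>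
      φSC * θ / (φSB * ξD * (β * pC ^ lam + σC2) + φSC * θ) *
        Real.exp (-(θ / PS) * (ξD * (β * pC ^ lam + σC2) / (φSC * θ) + 1 / φSB)) *
        Real.exp (-(ξB * (θ + σB2)) / (φCB * pC * (α - ξB + α * ξB)))
    let P2 : ℝ → ℝ := fun pC =>
      φCB * pC * (α - ξB + α * ξB) /
          (φSB * ξB * PS + φCB * pC * (α - ξB + α * ξB)) *
        Real.exp (-(ξD * (β * pC ^ lam + σC2)) / (φSC * PS)
          - ξB * σB2 / (φCB * pC * (α - ξB + α * ξB))) *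
        (1 - Real.exp (-(θ / PS) *
          (ξB * PS / (φCB * pC * (α - ξB + α * ξB)) + 1 / φSB)))
    let P3 : ℝ → ℝ := fun pC =>
      if α ≤ (ξB * ξD + ξB) / (ξB * ξD + ξB + ξD) then
        Real.exp (-(ξB * σD2) / (φCD * pC * (α - ξB + α * ξB)))
      else
        Real.exp (-(ξD * σD2) / (φCD * pC * (1 - α)))
    Tendsto (fun pC => 1 - (P1 pC + P2 pC) * P3 pC) atTop (nhds 1) :=
  outage_floor_tendsto_one_general θ PS σB2 σC2 σD2 φSB φSC φCB φCD β lam ξB ξD α hθ hPS hφSB hφSC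
    hφCB hβ hlam hξB hξD hα₁
end

section
/- For all real numbers a > 0 and b > 0, e^{−a}·(1 − e^{−b}) ≤ (b/(a+b))·(1 − e^{−(a+b)}). -/
/-!
Multiplying by `exp (a + b)`, the inequality becomes
`(exp b - 1) / b ≤ (exp (a + b) - 1) / (a + b)`, which holds because the slopes of the chords of
the convex function `exp` from `0` increase with the right endpoint.
-/

open Real

theorem Real.exp_sub_one_div_le_exp_sub_one_div {x y : ℝ} (hx : x ≠ 0) (hy : y ≠ 0) (hxy : x ≤ y) :
    (exp x - 1) / x ≤ (exp y - 1) / y := by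
  simpa using convexOn_exp.secant_mono (Set.mem_univ 0) (Set.mem_univ x) (Set.mem_univ y) hx hy hxy

/-- the analytic core of the worst-case-interference upper bound. -/
theorem exp_interference_inequality (a b : ℝ) (ha : 0 < a) (hb : 0 < b) :
    Real.exp (-a) * (1 - Real.exp (-b)) ≤
      b / (a + b) * (1 - Real.exp (-(a + b))) := by
  have hab : 0 < a + b := by linarith
  have hslope : (exp b - 1) / b ≤ (exp (a + b) - 1) / (a + b) :=
    exp_sub_one_div_le_exp_sub_one_div hb.ne' hab.ne' (by linarith)
  have hlhs : exp (-a) * (1 - exp (-b)) = exp (-(a + b)) * b * ((exp b - 1) / b) := by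
    field_simp
    rw [neg_add, exp_add, exp_neg b]
    field_simp
  have hrhs : b / (a + b) * (1 - exp (-(a + b))) =
      exp (-(a + b)) * b * ((exp (a + b) - 1) / (a + b)) := by
    rw [exp_neg]
    field_simp
  rw [hlhs, hrhs]
  gcongr
end

section
/- Let θ, P_S, p_C, σ_B², σ_C², σ_D², φ_SB, φ_SC, φ_CB > 0, β ≥ 0, λ ∈ [0,1], ξ_B > 0, ξ_D > 0, and let α satisfy ξ_B/(1+ξ_B) < α ≤ 1. Define P₂ = [φ_CB·p_C·(α − ξ_B + α·ξ_B)/(φ_SB·ξ_B·P_S + φ_CB·p_C·(α − ξ_B + α·ξ_B))]·exp(−ξ_D·(β·p_C^λ + σ_C²)/(φ_SC·P_S) − ξ_B·σ_B²/(φ_CB·p_C·(α − ξ_B + α·ξ_B)))·(1 − exp(−(θ/P_S)·(ξ_B·P_S/(φ_CB·p_C·(α − ξ_B + α·ξ_B)) + 1/φ_SB))), and P̃₂ = exp(−ξ_D·(β·p_C^λ + σ_C²)/(φ_SC·P_S) − ξ_B·(θ + σ_B²)/(φ_CB·p_C·(α − ξ_B + α·ξ_B)))·(1 − exp(−θ/(φ_SB·P_S))).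 Then P̃₂ ≤ P₂. Consequently 1 − (P₁ + P̃₂)·P₃ ≥ 1 − (P₁ + P₂)·P₃ for any P₁ ≥ 0 and P₃ ≥ 0, i.e., the joint outage probability of Theorem 2 is upper bounded by the worst-case-interference expression. -/
/-!
Write `A = φCB pC (α - ξB + α ξB) > 0`, `u = ξB θ / A` and `v = θ / (φSB PS)`. Up to the common
factor `exp (-(ξD (β pC ^ lam + σC2)) / (φSC PS) - ξB σB2 / A)`, `P̃₂` is `e⁻ᵘ (1 - e⁻ᵛ)` and `P₂` is
`v / (u + v) · (1 - e⁻⁽ᵘ⁺ᵛ⁾)`. Since `1 - e⁻⁽ᵘ⁺ᵛ⁾ = (1 - e⁻ᵘ) + e⁻ᵘ (1 - e⁻ᵛ)`, the comparison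
reduces to `u e⁻ᵘ (1 - e⁻ᵛ) ≤ v (1 - e⁻ᵘ)`, which follows from `1 - e⁻ᵛ ≤ v` and
`u e⁻ᵘ ≤ 1 - e⁻ᵘ`, both forms of `x + 1 ≤ eˣ`.
-/

open Real

namespace Real

lemma mul_exp_neg_le_one_sub_exp_neg (u : ℝ) : u * exp (-u) ≤ 1 - exp (-u) := by
  have h : (u + 1) * exp (-u) ≤ exp u * exp (-u) :=
    mul_le_mul_of_nonneg_right (add_one_le_exp u) (exp_pos _).le
  rw [← exp_add, add_neg_cancel, exp_zero] at h
  linarith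

lemma exp_neg_mul_one_sub_exp_neg_mul_add_le {u v : ℝ} (hu : 0 ≤ u) (hv : 0 ≤ v) :
    exp (-u) * (1 - exp (-v)) * (u + v) ≤ v * (1 - exp (-(u + v))) := by
  have hsplit : 1 - exp (-(u + v)) = (1 - exp (-u)) + exp (-u) * (1 - exp (-v)) := by
    rw [neg_add, exp_add]; ring
  have hcross : u * exp (-u) * (1 - exp (-v)) ≤ v * (1 - exp (-u)) :=
    calc u * exp (-u) * (1 - exp (-v))
        ≤ u * exp (-u) * v := by
          gcongr
          linarith [one_sub_le_exp_neg v]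
      _ ≤ (1 - exp (-u)) * v := by gcongr; exact mul_exp_neg_le_one_sub_exp_neg u
      _ = v * (1 - exp (-u)) := mul_comm _ _
  rw [hsplit]
  linarith

end Real

lemma worst_case_success_le_exact_success {E θ PS φSB ξB σB2 A : ℝ}
    (hθ : 0 < θ) (hPS : 0 < PS) (hφSB : 0 < φSB) (hξB : 0 < ξB) (hA : 0 < A) :
    exp (E - ξB * (θ + σB2) / A) * (1 - exp (-θ / (φSB * PS))) ≤
      A / (φSB * ξB * PS + A) * exp (E - ξB * σB2 / A) *
        (1 - exp (-(θ / PS) * (ξB * PS / A + 1 / φSB))) := by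
  set u := ξB * θ / A
  set v := θ / (φSB * PS)
  have hu : 0 < u := by positivity
  have hv : 0 < v := by positivity
  have hworst : E - ξB * (θ + σB2) / A = (E - ξB * σB2 / A) + -u := by ring
  have hexact : -(θ / PS) * (ξB * PS / A + 1 / φSB) = -(u + v) := by
    simp only [u, v]; field_simp
  have hweight : A / (φSB * ξB * PS + A) = v / (u + v) := by
    simp only [u, v]; field_simp
  have hkey : exp (-u) * (1 - exp (-v)) ≤ v / (u + v) * (1 - exp (-(u + v))) := by
    rw [div_mul_eq_mul_div, le_div_iff₀ (by positivity)]
    exact exp_neg_mul_one_sub_exp_neg_mul_add_le hu.le hv.le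
  rw [hworst, hexact, neg_div, hweight, exp_add]
  calc exp (E - ξB * σB2 / A) * exp (-u) * (1 - exp (-v))
      = exp (E - ξB * σB2 / A) * (exp (-u) * (1 - exp (-v))) := mul_assoc ..
    _ ≤ exp (E - ξB * σB2 / A) * (v / (u + v) * (1 - exp (-(u + v)))) := by gcongr
    _ = v / (u + v) * exp (E - ξB * σB2 / A) * (1 - exp (-(u + v))) := by ring

theorem worst_case_interference_upper_bound_general
    (θ PS pC σB2 σC2 φSB φSC φCB β lam ξB ξD α : ℝ)
    (hθ : 0 < θ) (hPS : 0 < PS) (hpC : 0 < pC)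
    (hφSB : 0 < φSB) (hφCB : 0 < φCB)
    (hξB : 0 < ξB)
    (hα₁ : ξB / (1 + ξB) < α) :
    let P2 : ℝ := φCB * pC * (α - ξB + α * ξB) /
        (φSB * ξB * PS + φCB * pC * (α - ξB + α * ξB)) *
      Real.exp (-(ξD * (β * pC ^ lam + σC2)) / (φSC * PS)
        - ξB * σB2 / (φCB * pC * (α - ξB + α * ξB))) *
      (1 - Real.exp (-(θ / PS) *
        (ξB * PS / (φCB * pC * (α - ξB + α * ξB)) + 1 / φSB)))
    let P2t : ℝ := Real.exp (-(ξD * (β * pC ^ lam + σC2)) / (φSC * PS)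
        - ξB * (θ + σB2) / (φCB * pC * (α - ξB + α * ξB))) *
      (1 - Real.exp (-θ / (φSB * PS)))
    P2t ≤ P2 ∧
      ∀ P1 P3 : ℝ, 0 ≤ P1 → 0 ≤ P3 →
        1 - (P1 + P2) * P3 ≤ 1 - (P1 + P2t) * P3 := by
  intro P2 P2t
  have hgap : 0 < α - ξB + α * ξB := by
    have := (div_lt_iff₀ (by positivity : 0 < 1 + ξB)).mp hα₁
    linarith
  have hP2t : P2t ≤ P2 :=
    worst_case_success_le_exact_success hθ hPS hφSB hξB (by positivity)
  exact ⟨hP2t, fun P1 P3 _ hP3 ↦ sub_le_sub_left (by gcongr) 1⟩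

/-- the worst-case-interference approximation `P̃₂` is a lower bound of
`P₂`, hence the joint outage probability is upper bounded by the worst-case
expression. -/
theorem worst_case_interference_upper_bound
    (θ PS pC σB2 σC2 σD2 φSB φSC φCB β lam ξB ξD α : ℝ)
    (hθ : 0 < θ) (hPS : 0 < PS) (hpC : 0 < pC)
    (hσB : 0 < σB2) (hσC : 0 < σC2) (hσD : 0 < σD2)
    (hφSB : 0 < φSB) (hφSC : 0 < φSC) (hφCB : 0 < φCB)
    (hβ : 0 ≤ β) (hlam : lam ∈ Set.Icc (0 : ℝ) 1)
    (hξB : 0 < ξB) (hξD : 0 < ξD)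
    (hα₁ : ξB / (1 + ξB) < α) (hα₂ : α ≤ 1) :
    let P2 : ℝ := φCB * pC * (α - ξB + α * ξB) /
        (φSB * ξB * PS + φCB * pC * (α - ξB + α * ξB)) *
      Real.exp (-(ξD * (β * pC ^ lam + σC2)) / (φSC * PS)
        - ξB * σB2 / (φCB * pC * (α - ξB + α * ξB))) *
      (1 - Real.exp (-(θ / PS) *
        (ξB * PS / (φCB * pC * (α - ξB + α * ξB)) + 1 / φSB)))
    let P2t : ℝ := Real.exp (-(ξD * (β * pC ^ lam + σC2)) / (φSC * PS)
        - ξB * (θ + σB2) / (φCB * pC * (α - ξB + α * ξB))) *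
      (1 - Real.exp (-θ / (φSB * PS)))
    P2t ≤ P2 ∧
      ∀ P1 P3 : ℝ, 0 ≤ P1 → 0 ≤ P3 →
        1 - (P1 + P2) * P3 ≤ 1 - (P1 + P2t) * P3 :=
  worst_case_interference_upper_bound_general θ PS pC σB2 σC2 φSB φSC φCB β lam ξB ξD α hθ hPS hpC
    hφSB hφCB hξB hα₁
end

section
/- Let θ, p_C, σ_B², σ_D², φ_CB, φ_CD > 0, ξ_B > 0, ξ_D > 0, and let A, B be nonnegative constants with A + B > 0. Define f(α) = exp(−ξ_B·(θ + σ_B²)/(φ_CB·p_C·(α − ξ_B + α·ξ_B))) and g(α) = exp(−ξ_B·σ_D²/(φ_CD·p_C·(α − ξ_B + α·ξ_B))). Then the function P̃_out(α) = 1 − (A + B)·f(α)·g(α) is strictly decreasing on the interval (ξ_B/(1+ξ_B), (ξ_B·ξ_D + ξ_B)/(ξ_B·ξ_D + ξ_B + ξ_D)]. -/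
open Set Real

/-!
For `α > ξ_B / (1 + ξ_B)` the common denominator `α - ξ_B + α ξ_B = (1 + ξ_B) α - ξ_B` is positive
and increasing, so each exponent `-K / (c (α - ξ_B + α ξ_B))` with `K, c > 0` increases. Hence the
positive product `f α * g α` is strictly increasing and `1 - (A + B) f α g α` strictly decreasing.
-/

lemma StrictMonoOn.mul {α M₀ : Type*} [Preorder α] [MulZeroClass M₀] [PartialOrder M₀]
    [PosMulStrictMono M₀] [MulPosStrictMono M₀] {f g : α → M₀} {s : Set α}
    (hf : StrictMonoOn f s) (hg : StrictMonoOn g s)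
    (hf₀ : ∀ x ∈ s, 0 ≤ f x) (hg₀ : ∀ x ∈ s, 0 ≤ g x) :
    StrictMonoOn (f * g) s :=
  fun _ hx _ hy h ↦ mul_lt_mul'' (hf hx hy h) (hg hx hy h) (hf₀ _ hx) (hg₀ _ hx)

lemma strictMonoOn_exp_neg_div_mul {K c : ℝ} (hK : 0 < K) (hc : 0 < c) :
    StrictMonoOn (fun x ↦ exp (-K / (c * x))) (Ioi 0) := by
  intro x hx y _ hxy
  rw [exp_lt_exp, neg_div, neg_div, neg_lt_neg_iff]
  exact div_lt_div_of_pos_left hK (mul_pos hc hx) (by gcongr)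

lemma strictMono_sub_add_mul {ξ : ℝ} (hξ : 0 < 1 + ξ) : StrictMono fun α : ℝ ↦ α - ξ + α * ξ :=
  fun a b hab ↦ by nlinarith

lemma mapsTo_sub_add_mul_Ioi {ξ : ℝ} (hξ : 0 < 1 + ξ) :
    MapsTo (fun α : ℝ ↦ α - ξ + α * ξ) (Ioi (ξ / (1 + ξ))) (Ioi 0) := by
  intro α hα
  rw [mem_Ioi, div_lt_iff₀ hξ] at hα
  exact mem_Ioi.2 (by linarith)

theorem outage_upper_bound_strictAnti_first_branch_general
    (θ pC σB2 σD2 φCB φCD ξB ξD A B : ℝ)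
    (hθ : 0 < θ) (hpC : 0 < pC) (hσB : 0 < σB2) (hσD : 0 < σD2)
    (hφCB : 0 < φCB) (hφCD : 0 < φCD) (hξB : 0 < ξB) (hAB : 0 < A + B) :
    let f : ℝ → ℝ := fun α =>
      Real.exp (-(ξB * (θ + σB2)) / (φCB * pC * (α - ξB + α * ξB)))
    let g : ℝ → ℝ := fun α =>
      Real.exp (-(ξB * σD2) / (φCD * pC * (α - ξB + α * ξB)))
    StrictAntiOn (fun α => 1 - (A + B) * f α * g α)
      (Ioc (ξB / (1 + ξB)) ((ξB * ξD + ξB) / (ξB * ξD + ξB + ξD))) := by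
  intro f g
  have hξ : 0 < 1 + ξB := by linarith
  have hden := (strictMono_sub_add_mul hξ).strictMonoOn (Ioi (ξB / (1 + ξB)))
  have hf : StrictMonoOn f (Ioi (ξB / (1 + ξB))) :=
    (strictMonoOn_exp_neg_div_mul (by positivity) (by positivity)).comp hden
      (mapsTo_sub_add_mul_Ioi hξ)
  have hg : StrictMonoOn g (Ioi (ξB / (1 + ξB))) :=
    (strictMonoOn_exp_neg_div_mul (by positivity) (by positivity)).comp hden
      (mapsTo_sub_add_mul_Ioi hξ)
  have hfg := hf.mul hg (fun _ _ ↦ (exp_pos _).le) (fun _ _ ↦ (exp_pos _).le)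
  refine StrictAntiOn.mono (fun a ha b hb hab ↦ ?_) Ioc_subset_Ioi_self
  have := mul_lt_mul_of_pos_left (hfg ha hb hab) hAB
  simp only [Pi.mul_apply, ← mul_assoc] at this
  linarith

/-- on the first branch, the upper bound of the joint outage
probability is strictly decreasing in the power splitting factor `α`. -/
theorem outage_upper_bound_strictAnti_first_branch
    (θ pC σB2 σD2 φCB φCD ξB ξD A B : ℝ)
    (hθ : 0 < θ) (hpC : 0 < pC) (hσB : 0 < σB2) (hσD : 0 < σD2)
    (hφCB : 0 < φCB) (hφCD : 0 < φCD) (hξB : 0 < ξB) (hξD : 0 < ξD)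
    (hA : 0 ≤ A) (hB : 0 ≤ B) (hAB : 0 < A + B) :
    let f : ℝ → ℝ := fun α =>
      Real.exp (-(ξB * (θ + σB2)) / (φCB * pC * (α - ξB + α * ξB)))
    let g : ℝ → ℝ := fun α =>
      Real.exp (-(ξB * σD2) / (φCD * pC * (α - ξB + α * ξB)))
    StrictAntiOn (fun α => 1 - (A + B) * f α * g α)
      (Ioc (ξB / (1 + ξB)) ((ξB * ξD + ξB) / (ξB * ξD + ξB + ξD))) :=
  outage_upper_bound_strictAnti_first_branch_general θ pC σB2 σD2 φCB φCD ξB ξD A B hθ hpC hσB hσD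
    hφCB hφCD hξB hAB
end

section
/- Let ξ_B, ξ_D, θ, σ_B², σ_D², φ_CB, φ_CD, p_C > 0. Set K = ξ_B/(1+ξ_B) and M = √(φ_CD·(θ + σ_B²)·K/(φ_CB·ξ_D·σ_D²)). Define h(α) = ξ_B·(1+ξ_B)·(θ + σ_B²)/(φ_CB·p_C·((1+ξ_B)·α − ξ_B)²) and l(α) = −ξ_D·σ_D²/(φ_CD·p_C·(1 − α)²). Then α* = (K + M)/(1 + M) satisfies K < α* < 1, and α* is the unique solution in (K, 1) of the equation h(α) + l(α) = 0. -/
/-!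
After the substitution `(1 + ξB) α - ξB = (1 + ξB) (α - K)`, the equation `h α + l α = 0` reads
`A / (α - K)² = B / (1 - α)²` with `A, B > 0` and `M = √(A / B)`. On `(K, 1)` both `α - K` and
`1 - α` are positive, so taking square roots gives `(α - K) / (1 - α) = M`, which is linear in `α`
with the single root `(K + M) / (1 + M)`, the point dividing `[K, 1]` in the ratio `M : 1`.
-/

open Set Real

lemma add_div_one_add_mem_Ioo {K M : ℝ} (hK : K < 1) (hM : 0 < M) :
    (K + M) / (1 + M) ∈ Ioo K 1 := by
  have h1M : 0 < 1 + M := by linarith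
  constructor
  · rw [lt_div_iff₀ h1M]
    nlinarith
  · rw [div_lt_one h1M]
    linarith

lemma sub_div_one_sub_eq_iff {K M α : ℝ} (hα : α ≠ 1) (hM : 1 + M ≠ 0) :
    (α - K) / (1 - α) = M ↔ α = (K + M) / (1 + M) := by
  rw [div_eq_iff (sub_ne_zero.mpr hα.symm), eq_div_iff hM]
  constructor <;> intro h <;> linarith

lemma div_sq_eq_div_sq_iff {A B K α : ℝ} (hA : 0 ≤ A) (hB : 0 < B) (hKα : K < α) (hα : α < 1) :
    A / (α - K) ^ 2 = B / (1 - α) ^ 2 ↔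
      α = (K + √(A / B)) / (1 + √(A / B)) := by
  have hαK : 0 < α - K := by linarith
  have h1α : 0 < 1 - α := by linarith
  have hsq : A / (α - K) ^ 2 = B / (1 - α) ^ 2 ↔ A / B = ((α - K) / (1 - α)) ^ 2 := by
    rw [div_eq_div_iff (by positivity) (by positivity), div_pow,
      div_eq_div_iff hB.ne' (by positivity)]
    constructor <;> intro h <;> linarith
  rw [hsq, ← sqrt_eq_iff_eq_sq (by positivity) (by positivity), eq_comm,
    sub_div_one_sub_eq_iff hα.ne (by positivity)]

/-- the optimal power splitting factor `α* = (K + M)/(1 + M)` lies in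
`(K, 1)` and is the unique solution of `h(α) + l(α) = 0` there. -/
theorem optimal_power_splitting_factor
    (ξB ξD θ σB2 σD2 φCB φCD pC : ℝ)
    (hξB : 0 < ξB) (hξD : 0 < ξD) (hθ : 0 < θ) (hσB : 0 < σB2) (hσD : 0 < σD2)
    (hφCB : 0 < φCB) (hφCD : 0 < φCD) (hpC : 0 < pC) :
    let K : ℝ := ξB / (1 + ξB)
    let M : ℝ := Real.sqrt (φCD * (θ + σB2) * K / (φCB * ξD * σD2))
    let h : ℝ → ℝ := fun α =>
      ξB * (1 + ξB) * (θ + σB2) / (φCB * pC * ((1 + ξB) * α - ξB) ^ 2)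
    let l : ℝ → ℝ := fun α => -(ξD * σD2) / (φCD * pC * (1 - α) ^ 2)
    let αstar : ℝ := (K + M) / (1 + M)
    K < αstar ∧ αstar < 1 ∧ h αstar + l αstar = 0 ∧
      ∀ α ∈ Ioo K 1, h α + l α = 0 → α = αstar := by
  intro K M h l αstar
  set A := K * (θ + σB2) / (φCB * pC)
  set B := ξD * σD2 / (φCD * pC)
  have hK : K < 1 := (div_lt_one (by positivity)).mpr (by linarith)
  have hM : M = √(A / B) := by
    simp only [M, A, B]
    congr 1
    field_simp
  have hhl (α : ℝ) : h α + l α = 0 ↔ A / (α - K) ^ 2 = B / (1 - α) ^ 2 := by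
    have hh : h α = A / (α - K) ^ 2 := by
      simp only [h, A, K]
      field_simp
    simp only [hh, l, B, div_div, neg_div, ← sub_eq_add_neg, sub_eq_zero]
  have hmem : αstar ∈ Ioo K 1 := add_div_one_add_mem_Ioo hK (sqrt_pos.mpr (by positivity))
  have hroot (α : ℝ) (hα : α ∈ Ioo K 1) : h α + l α = 0 ↔ α = αstar := by
    rw [hhl, div_sq_eq_div_sq_iff (by positivity) (by positivity) hα.1 hα.2, ← hM]
  exact ⟨hmem.1, hmem.2, (hroot αstar hmem).mpr rfl, fun α hα => (hroot α hα).mp⟩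
end

section
/- Let C, D, E, F, G, H > 0 and λ ∈ (0,1]. Define Q(p) = λ·C²·F·G·p^{1+3λ} + λ·C·(2·D·F + E)·G·p^{1+2λ} + λ·(D²·F·G + D·E·G + C·E)·p^{1+λ} − C²·F·H·p^{2λ} − C·(2·D·F + E)·H·p^{λ} − D·(D·F + E)·H for p > 0. Then Q has at most one root in (0, +∞); moreover, if p° is such a root then Q(p) < 0 for 0 < p < p° and Q(p) > 0 for p > p°. -/
/-!
Factoring out `p ^ (2 * lam)` writes `Q p = p ^ (2 * lam) * R p`, where every term of `R` is a
power of `p` whose exponent has the same sign as its coefficient: the exponents `1 + lam`, `1`,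
`1 - lam` carry positive coefficients and `0`, `-lam`, `-2 * lam` negative ones. Since `lam ≤ 1`,
`R` is strictly increasing on `(0, ∞)`, and `Q` has the sign of `R` there.
-/

open Set Real

section SignChange

variable {α : Type*} [LinearOrder α] {s : Set α} {f w g : α → ℝ}

theorem sign_of_eq_pos_mul_strictMonoOn (hf : ∀ x ∈ s, f x = w x * g x)
    (hw : ∀ x ∈ s, 0 < w x) (hg : StrictMonoOn g s) {x₀ : α} (hx₀ : x₀ ∈ s)
    (h₀ : f x₀ = 0) :
    (∀ x ∈ s, x < x₀ → f x < 0) ∧ (∀ x ∈ s, x₀ < x → 0 < f x) := by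
  have hg₀ : g x₀ = 0 := by
    rw [hf x₀ hx₀] at h₀
    exact (mul_eq_zero.mp h₀).resolve_left (hw x₀ hx₀).ne'
  refine ⟨fun x hx hlt => ?_, fun x hx hlt => ?_⟩
  · rw [hf x hx]
    exact mul_neg_of_pos_of_neg (hw x hx) (hg₀ ▸ hg hx hx₀ hlt)
  · rw [hf x hx]
    exact mul_pos (hw x hx) (hg₀ ▸ hg hx₀ hx hlt)

theorem subsingleton_zeros_of_eq_pos_mul_strictMonoOn (hf : ∀ x ∈ s, f x = w x * g x)
    (hw : ∀ x ∈ s, 0 < w x) (hg : StrictMonoOn g s) :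
    {x | x ∈ s ∧ f x = 0}.Subsingleton := by
  rintro a ⟨ha, hfa⟩ b ⟨hb, hfb⟩
  by_contra hne
  rcases lt_or_gt_of_ne hne with hab | hba
  · exact ((sign_of_eq_pos_mul_strictMonoOn hf hw hg ha hfa).2 b hb hab).ne' hfb
  · exact ((sign_of_eq_pos_mul_strictMonoOn hf hw hg hb hfb).2 a ha hba).ne' hfa

end SignChange

section GeneralizedPolynomial

variable (C D E F G H lam : ℝ)

noncomputable def generalizedPolynomial (p : ℝ) : ℝ :=
  lam * C ^ 2 * F * G * p ^ (1 + 3 * lam)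
    + lam * C * (2 * D * F + E) * G * p ^ (1 + 2 * lam)
    + lam * (D ^ 2 * F * G + D * E * G + C * E) * p ^ (1 + lam)
    - C ^ 2 * F * H * p ^ (2 * lam)
    - C * (2 * D * F + E) * H * p ^ lam
    - D * (D * F + E) * H

noncomputable def generalizedPolynomialReduced (p : ℝ) : ℝ :=
  lam * C ^ 2 * F * G * p ^ (1 + lam)
    + lam * C * (2 * D * F + E) * G * p
    + lam * (D ^ 2 * F * G + D * E * G + C * E) * p ^ (1 - lam)
    - C ^ 2 * F * H
    - C * (2 * D * F + E) * H * p ^ (-lam)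
    - D * (D * F + E) * H * p ^ (-(2 * lam))

variable {C D E F G H lam}

theorem generalizedPolynomial_eq_rpow_mul_reduced {p : ℝ} (hp : 0 < p) :
    generalizedPolynomial C D E F G H lam p
      = p ^ (2 * lam) * generalizedPolynomialReduced C D E F G H lam p := by
  have shift : ∀ x y : ℝ, 2 * lam + x = y → p ^ (2 * lam) * p ^ x = p ^ y := fun x y h => by
    rw [← rpow_add hp, h]
  have shift_one : p ^ (2 * lam) * p = p ^ (1 + 2 * lam) := by
    simpa only [rpow_one] using shift 1 _ (add_comm _ _)
  have cancel : p ^ (2 * lam) * p ^ (-(2 * lam)) = 1 := by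
    simpa only [rpow_zero] using shift _ 0 (add_neg_cancel _)
  unfold generalizedPolynomial generalizedPolynomialReduced
  linear_combination -(lam * C ^ 2 * F * G * shift (1 + lam) (1 + 3 * lam) (by ring)
    + lam * C * (2 * D * F + E) * G * shift_one
    + lam * (D ^ 2 * F * G + D * E * G + C * E) * shift (1 - lam) (1 + lam) (by ring)
    - C * (2 * D * F + E) * H * shift (-lam) lam (by ring) - D * (D * F + E) * H * cancel)

theorem strictMonoOn_generalizedPolynomialReduced (hC : 0 < C) (hD : 0 < D) (hE : 0 < E)
    (hF : 0 < F) (hG : 0 < G) (hH : 0 < H) (hlam : lam ∈ Ioc (0 : ℝ) 1) :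
    StrictMonoOn (generalizedPolynomialReduced C D E F G H lam) (Ioi 0) := by
  obtain ⟨hlam₀, hlam₁⟩ := hlam
  intro a (ha : 0 < a) b _ hab
  have h₁ : lam * C ^ 2 * F * G * a ^ (1 + lam) ≤ lam * C ^ 2 * F * G * b ^ (1 + lam) := by
    gcongr
  have h₂ : lam * C * (2 * D * F + E) * G * a < lam * C * (2 * D * F + E) * G * b := by
    gcongr
  have h₃ : lam * (D ^ 2 * F * G + D * E * G + C * E) * a ^ (1 - lam)
      ≤ lam * (D ^ 2 * F * G + D * E * G + C * E) * b ^ (1 - lam) := by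
    gcongr
  have h₄ : C * (2 * D * F + E) * H * b ^ (-lam) ≤ C * (2 * D * F + E) * H * a ^ (-lam) :=
    mul_le_mul_of_nonneg_left (rpow_le_rpow_of_nonpos ha hab.le (by linarith)) (by positivity)
  have h₅ : D * (D * F + E) * H * b ^ (-(2 * lam)) ≤ D * (D * F + E) * H * a ^ (-(2 * lam)) :=
    mul_le_mul_of_nonneg_left (rpow_le_rpow_of_nonpos ha hab.le (by linarith)) (by positivity)
  simp only [generalizedPolynomialReduced]
  linarith

end GeneralizedPolynomial

/-- the generalized polynomial `Q` has at most one positive root, and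
`Q` is negative before that root and positive after it. -/
theorem generalized_polynomial_unique_root
    (C D E F G H lam : ℝ)
    (hC : 0 < C) (hD : 0 < D) (hE : 0 < E) (hF : 0 < F) (hG : 0 < G) (hH : 0 < H)
    (hlam : lam ∈ Ioc (0 : ℝ) 1) :
    let Q : ℝ → ℝ := fun p =>
      lam * C ^ 2 * F * G * p ^ (1 + 3 * lam)
        + lam * C * (2 * D * F + E) * G * p ^ (1 + 2 * lam)
        + lam * (D ^ 2 * F * G + D * E * G + C * E) * p ^ (1 + lam)
        - C ^ 2 * F * H * p ^ (2 * lam)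
        - C * (2 * D * F + E) * H * p ^ lam
        - D * (D * F + E) * H
    {p : ℝ | 0 < p ∧ Q p = 0}.Subsingleton ∧
      ∀ p₀ : ℝ, 0 < p₀ → Q p₀ = 0 →
        (∀ p : ℝ, 0 < p → p < p₀ → Q p < 0) ∧ (∀ p : ℝ, p₀ < p → 0 < Q p) := by
  show {p : ℝ | p ∈ Ioi 0 ∧ generalizedPolynomial C D E F G H lam p = 0}.Subsingleton ∧ _
  have factor : ∀ p ∈ Ioi (0 : ℝ), generalizedPolynomial C D E F G H lam p
      = p ^ (2 * lam) * generalizedPolynomialReduced C D E F G H lam p :=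
    fun p hp => generalizedPolynomial_eq_rpow_mul_reduced hp
  have weight_pos : ∀ p ∈ Ioi (0 : ℝ), 0 < p ^ (2 * lam) := fun p hp => rpow_pos_of_pos hp _
  have mono := strictMonoOn_generalizedPolynomialReduced hC hD hE hF hG hH hlam
  refine ⟨subsingleton_zeros_of_eq_pos_mul_strictMonoOn factor weight_pos mono,
    fun p₀ hp₀ h₀ => ?_⟩
  obtain ⟨below, above⟩ := sign_of_eq_pos_mul_strictMonoOn factor weight_pos mono hp₀ h₀
  exact ⟨below, fun p hp => above p (hp₀.trans hp) hp⟩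
end

section
/- Let h_SB, h_SC, h_CB, h_CD, p_S, σ_B², σ_C², σ_D², P_C > 0, β ≥ 0, λ ∈ [0,1]. Define R_B(α, p) = log₂(1 + α·p·h_CB/(p_S·h_SB + (1−α)·p·h_CB + σ_B²)), R_SC(p) = log₂(1 + p_S·h_SC/(β·p^λ + σ_C²)), R_{CD,S}(α, p) = log₂(1 + (1−α)·p·h_CD/σ_D²), and R_min(α, p) = min(R_B(α, p), R_SC(p), R_{CD,S}(α, p)) on the compact set [0,1] × [0, P_C]. Let p̄_C be the unique positive root of F₂(x) = h_CD·β·x^{1+λ} + h_CD·σ_C²·x − σ_D²·p_S·h_SC. If p̄_C ≥ P_C, then every maximizer (α*, p*) of R_min over [0,1] × [0, P_C] satisfies R_SC(p*) ≥ R_{CD,S}(α*, p*). -/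
/-!
When `p̄_C ≥ P_C`, `R_SC(p) ≥ R_{CD,S}(α, p)` holds at every feasible point, not only at
maximizers. Since `F₂` is increasing on `[0, ∞)` and vanishes at `p̄_C`, every
`p ≤ p̄_C` has `F₂(p) ≤ 0`, i.e. `p h_CD (β p^λ + σ_C²) ≤ σ_D² p_S h_SC`; this says that the
second-hop SNR at full relay power is at most the first-hop SNR, and giving a fraction `α` of the
power to the uplink only lowers the former. Monotonicity of `log₂` finishes the proof.
-/

open Set Real

noncomputable section

/-- The function `F₂` of the paper, whose positive root is `p̄_C`. -/
def relayPowerBalance (hCD β σC2 σD2 pS hSC lam x : ℝ) : ℝ :=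
  hCD * β * x ^ (1 + lam) + hCD * σC2 * x - σD2 * pS * hSC

variable {hCD β σC2 σD2 pS hSC lam : ℝ}

theorem relayPowerBalance_monotoneOn (hCD_nonneg : 0 ≤ hCD) (hβ : 0 ≤ β) (hσC : 0 ≤ σC2)
    (hlam : 0 ≤ lam) : MonotoneOn (relayPowerBalance hCD β σC2 σD2 pS hSC lam) (Ici 0) := by
  intro x hx y _ hxy
  have hpow : x ^ (1 + lam) ≤ y ^ (1 + lam) := rpow_le_rpow hx hxy (by linarith)
  unfold relayPowerBalance
  gcongr

theorem relayPowerBalance_eq_mul_sub {x : ℝ} (hx : 0 ≤ x) (hlam : 0 ≤ lam) :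
    relayPowerBalance hCD β σC2 σD2 pS hSC lam x =
      x * hCD * (β * x ^ lam + σC2) - σD2 * pS * hSC := by
  rw [relayPowerBalance, rpow_one_add' hx (by linarith)]
  ring

theorem secondHop_snr_le_firstHop_snr {α p : ℝ} (hα : 0 ≤ α) (hp : 0 ≤ p)
    (hCD_nonneg : 0 ≤ hCD) (hβ : 0 ≤ β) (hσC : 0 < σC2) (hσD : 0 < σD2) (hlam : 0 ≤ lam)
    (hF : relayPowerBalance hCD β σC2 σD2 pS hSC lam p ≤ 0) :
    (1 - α) * p * hCD / σD2 ≤ pS * hSC / (β * p ^ lam + σC2) := by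
  have hden : 0 < β * p ^ lam + σC2 := by positivity
  rw [relayPowerBalance_eq_mul_sub hp hlam] at hF
  rw [div_le_div_iff₀ hσD hden]
  calc (1 - α) * p * hCD * (β * p ^ lam + σC2)
      ≤ p * hCD * (β * p ^ lam + σC2) := by
        gcongr
        exact mul_le_of_le_one_left hp (by linarith)
    _ ≤ pS * hSC * σD2 := by linarith

end

theorem maxmin_rate_case_two_general
    (hSB hSC hCB hCD pS σB2 σC2 σD2 PC β lam pbar : ℝ)
    (hhCD : 0 < hCD)
    (hσC : 0 < σC2) (hσD : 0 < σD2)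
    (hβ : 0 ≤ β) (hlam : lam ∈ Icc (0 : ℝ) 1)
    (hpbar_root : hCD * β * pbar ^ (1 + lam) + hCD * σC2 * pbar - σD2 * pS * hSC = 0)
    (hpbar_ge : PC ≤ pbar) :
    let RB : ℝ → ℝ → ℝ := fun α p =>
      logb 2 (1 + α * p * hCB / (pS * hSB + (1 - α) * p * hCB + σB2))
    let RSC : ℝ → ℝ := fun p => logb 2 (1 + pS * hSC / (β * p ^ lam + σC2))
    let RCDS : ℝ → ℝ → ℝ := fun α p => logb 2 (1 + (1 - α) * p * hCD / σD2)
    let Rmin : ℝ → ℝ → ℝ := fun α p => min (RB α p) (min (RSC p) (RCDS α p))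
    ∀ αs ps : ℝ, αs ∈ Icc (0 : ℝ) 1 → ps ∈ Icc 0 PC →
      (∀ α ∈ Icc (0 : ℝ) 1, ∀ p ∈ Icc 0 PC, Rmin α p ≤ Rmin αs ps) →
      RCDS αs ps ≤ RSC ps := by
  intro RB RSC RCDS Rmin αs ps ⟨hα0, hα1⟩ ⟨hps0, hpsPC⟩ _
  have hps_le : ps ≤ pbar := hpsPC.trans hpbar_ge
  have hF : relayPowerBalance hCD β σC2 σD2 pS hSC lam ps ≤ 0 :=
    hpbar_root ▸ relayPowerBalance_monotoneOn hhCD.le hβ hσC.le hlam.1 hps0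
      (hps0.trans hps_le) hps_le
  have hsnr_nonneg : 0 ≤ (1 - αs) * ps * hCD / σD2 :=
    div_nonneg (mul_nonneg (mul_nonneg (by linarith) hps0) hhCD.le) hσD.le
  exact logb_le_logb_of_le one_lt_two (by linarith) <| add_le_add_right
    (secondHop_snr_le_firstHop_snr hα0 hps0 hhCD.le hβ hσC hσD hlam.1 hF) 1

/-- Lemma 2, case `p̄_C ≥ P_C`: every maximizer of the minimum
achievable rate satisfies `R_SC(p*) ≥ R_{CD,S}(α*, p*)`. -/
theorem maxmin_rate_case_two
    (hSB hSC hCB hCD pS σB2 σC2 σD2 PC β lam pbar : ℝ)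
    (hhSB : 0 < hSB) (hhSC : 0 < hSC) (hhCB : 0 < hCB) (hhCD : 0 < hCD)
    (hpS : 0 < pS) (hσB : 0 < σB2) (hσC : 0 < σC2) (hσD : 0 < σD2) (hPC : 0 < PC)
    (hβ : 0 ≤ β) (hlam : lam ∈ Icc (0 : ℝ) 1)
    (hpbar_pos : 0 < pbar)
    (hpbar_root : hCD * β * pbar ^ (1 + lam) + hCD * σC2 * pbar - σD2 * pS * hSC = 0)
    (hpbar_ge : PC ≤ pbar) :
    let RB : ℝ → ℝ → ℝ := fun α p =>
      logb 2 (1 + α * p * hCB / (pS * hSB + (1 - α) * p * hCB + σB2))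
    let RSC : ℝ → ℝ := fun p => logb 2 (1 + pS * hSC / (β * p ^ lam + σC2))
    let RCDS : ℝ → ℝ → ℝ := fun α p => logb 2 (1 + (1 - α) * p * hCD / σD2)
    let Rmin : ℝ → ℝ → ℝ := fun α p => min (RB α p) (min (RSC p) (RCDS α p))
    ∀ αs ps : ℝ, αs ∈ Icc (0 : ℝ) 1 → ps ∈ Icc 0 PC →
      (∀ α ∈ Icc (0 : ℝ) 1, ∀ p ∈ Icc 0 PC, Rmin α p ≤ Rmin αs ps) →
      RCDS αs ps ≤ RSC ps :=
  maxmin_rate_case_two_general hSB hSC hCB hCD pS σB2 σC2 σD2 PC β lam pbar hhCD hσC hσD hβ hlam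
    hpbar_root hpbar_ge
end

section
/- Let h_SB, h_SC, h_CB, h_CD, p_S, σ_C² > 0, β ≥ 0, λ ∈ [0,1], and set a = σ_D²·h_SC·h_CB·p_S > 0 with σ_D² > 0, and v(p) = β·p^λ + σ_C². Then the function p ↦ (h_CD·h_CB·p·v(p) − a)/(h_SB·h_CD·p_S·v(p) + a) is strictly increasing on (0, +∞). Consequently, the function R_B(ᾱ(p), p) = log₂(1 + (h_CD·h_CB·p·(β·p^λ + σ_C²) − σ_D²·h_SC·h_CB·p_S)/(h_SB·h_CD·p_S·(β·p^λ + σ_C²) + σ_D²·h_SC·h_CB·p_S)) is strictly increasing on the set of p > 0 where its logarithm argument is at least 1. -/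
open Set Real

/-!
With `c₁ = h_CD·h_CB`, `c₂ = h_SB·h_CD·p_S` and `v > 0`, the rate ratio splits as
`(c₁ p v - a) / (c₂ v + a) = c₁ · p / (c₂ + a / v) - a / (c₂ v + a)`.
As `v` is nondecreasing, the first term is strictly increasing in `p` and the second is
nondecreasing, so the ratio is strictly increasing; `log₂ (1 + ·)` preserves this.
-/

theorem strictMonoOn_mul_sub_div_mul_add {v : ℝ → ℝ} {c₁ c₂ a : ℝ}
    (hc₁ : 0 < c₁) (hc₂ : 0 ≤ c₂) (ha : 0 < a)
    (hv : ∀ p ∈ Ioi (0 : ℝ), 0 < v p) (hv_mono : MonotoneOn v (Ioi 0)) :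
    StrictMonoOn (fun p => (c₁ * p * v p - a) / (c₂ * v p + a)) (Ioi 0) := by
  have hsplit : ∀ p ∈ Ioi (0 : ℝ), (c₁ * p * v p - a) / (c₂ * v p + a)
      = c₁ * (p / (c₂ + a / v p)) - a / (c₂ * v p + a) := by
    intro p hp
    have := hv p hp
    field_simp
  intro p hp q hq hpq
  have hvp := hv p hp
  have hvq := hv q hq
  have hvpq : v p ≤ v q := hv_mono hp hq hpq.le
  have hfirst : p / (c₂ + a / v p) < q / (c₂ + a / v q) :=
    div_lt_div₀ hpq (by gcongr) (le_of_lt hq) (by positivity)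
  have hsecond : a / (c₂ * v q + a) ≤ a / (c₂ * v p + a) := by gcongr
  simp only [hsplit p hp, hsplit q hq]
  linarith [mul_lt_mul_of_pos_left hfirst hc₁]

/-- the rational function defining `R_B(ᾱ(p), p)` is strictly
increasing on `(0, ∞)`; hence `R_B(ᾱ(p), p)` is strictly increasing on the set of
positive `p` where the logarithm argument is at least `1`. -/
theorem RB_alphabar_strictMono
    (hSB hSC hCB hCD pS σC2 σD2 β lam : ℝ)
    (hhSB : 0 < hSB) (hhSC : 0 < hSC) (hhCB : 0 < hCB) (hhCD : 0 < hCD)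
    (hpS : 0 < pS) (hσC : 0 < σC2) (hσD : 0 < σD2)
    (hβ : 0 ≤ β) (hlam : lam ∈ Icc (0 : ℝ) 1) :
    let a : ℝ := σD2 * hSC * hCB * pS
    let v : ℝ → ℝ := fun p => β * p ^ lam + σC2
    let r : ℝ → ℝ := fun p =>
      (hCD * hCB * p * v p - a) / (hSB * hCD * pS * v p + a)
    0 < a ∧
    StrictMonoOn r (Ioi 0) ∧
    StrictMonoOn (fun p => logb 2 (1 + r p)) {p : ℝ | 0 < p ∧ 1 ≤ 1 + r p} := by
  intro a v r
  have ha : 0 < a := by positivity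
  have hv : ∀ p ∈ Ioi (0 : ℝ), 0 < v p := fun p (hp : 0 < p) => by positivity
  have hv_mono : MonotoneOn v (Ioi 0) := fun p hp q _ hpq =>
    add_le_add_left (mul_le_mul_of_nonneg_left (rpow_le_rpow (le_of_lt hp) hpq hlam.1) hβ) _
  have hr : StrictMonoOn r (Ioi 0) :=
    strictMonoOn_mul_sub_div_mul_add (by positivity) (by positivity) ha hv hv_mono
  refine ⟨ha, hr, fun p hp q hq hpq => ?_⟩
  have hrpq : r p < r q := hr hp.1 hq.1 hpq
  exact logb_lt_logb one_lt_two (by linarith [hp.2]) (by linarith)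
end

section
/- Let h_SB, h_CB, h_CD, p_S, σ_B², σ_D², P_C > 0. Define R_B(α) = log₂(1 + α·P_C·h_CB/(p_S·h_SB + (1−α)·P_C·h_CB + σ_B²)) and R_{CD,S}(α) = log₂(1 + (1−α)·P_C·h_CD/σ_D²) for α ∈ [0,1]. Then R_B is continuous and strictly increasing on [0,1], R_{CD,S} is continuous and strictly decreasing on [0,1], R_B(0) − R_{CD,S}(0) < 0 and R_B(1) − R_{CD,S}(1) > 0; hence there exists a unique ᾰ ∈ (0,1) with R_B(ᾰ) = R_{CD,S}(ᾰ), and min(R_B(α), R_{CD,S}(α)) over α ∈ [0,1] is maximized at α = ᾰ, with maximum value R_B(ᾰ) = R_{CD,S}(ᾰ). -/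
open Set Real

/-! The uplink rate `logb 2 (1 + α a / (c + (1 - α) a))` rises strictly from `0` at `α = 0`, since
the numerator grows while the interference `(1 - α) a` from the relay's own D2D message shrinks;
the D2D rate `logb 2 (1 + (1 - α) a' / c')` falls strictly to `0` at `α = 1`. By the intermediate
value theorem the two curves cross exactly once, and since one rises while the other falls, their
minimum is largest at the crossing. -/

theorem exists_unique_eq_of_strictMonoOn_of_strictAntiOn {f g : ℝ → ℝ} {a b : ℝ} (hab : a ≤ b)
    (hf : ContinuousOn f (Icc a b)) (hg : ContinuousOn g (Icc a b))
    (hf_mono : StrictMonoOn f (Icc a b)) (hg_anti : StrictAntiOn g (Icc a b))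
    (ha : f a < g a) (hb : g b < f b) :
    ∃ x ∈ Ioo a b, f x = g x ∧ ∀ y ∈ Icc a b, f y = g y → y = x := by
  have hsub_mono : StrictMonoOn (fun x => f x - g x) (Icc a b) := fun x hx y hy hxy =>
    sub_lt_sub (hf_mono hx hy hxy) (hg_anti hx hy hxy)
  obtain ⟨x, hx, hx_zero⟩ : (0 : ℝ) ∈ (fun x => f x - g x) '' Ioo a b :=
    intermediate_value_Ioo hab (hf.sub hg) ⟨sub_neg.2 ha, sub_pos.2 hb⟩
  refine ⟨x, hx, sub_eq_zero.1 hx_zero, fun y hy hy_eq => ?_⟩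
  exact hsub_mono.injOn hy (Ioo_subset_Icc_self hx) (by simp only [hy_eq, sub_self, hx_zero])

theorem min_le_min_of_eq_of_monotoneOn_of_antitoneOn {α β : Type*} [LinearOrder α] [LinearOrder β]
    {f g : α → β} {s : Set α} (hf : MonotoneOn f s) (hg : AntitoneOn g s) {x₀ x : α}
    (hx₀ : x₀ ∈ s) (hx : x ∈ s) (h_eq : f x₀ = g x₀) :
    min (f x) (g x) ≤ min (f x₀) (g x₀) := by
  rw [← h_eq, min_self]
  rcases le_total x x₀ with h | h
  · exact (min_le_left _ _).trans (hf hx hx₀ h)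
  · exact (min_le_right _ _).trans (h_eq ▸ hg hx₀ hx h)

section Rates

variable {a c : ℝ}

/-- `a` is the relay power as received at the base station, `c` the D2D interference plus noise. -/
noncomputable def relayUplinkRate (a c α : ℝ) : ℝ :=
  logb 2 (1 + α * a / (c + (1 - α) * a))

noncomputable def relayD2DRate (a c α : ℝ) : ℝ :=
  logb 2 (1 + (1 - α) * a / c)

theorem relayUplinkRate_zero : relayUplinkRate a c 0 = 0 := by
  simp [relayUplinkRate]

theorem relayD2DRate_one : relayD2DRate a c 1 = 0 := by
  simp [relayD2DRate]

variable (ha : 0 < a) (hc : 0 < c)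
include ha hc

theorem add_one_sub_mul_pos_of_mem_Icc {α : ℝ} (hα : α ∈ Icc (0 : ℝ) 1) : 0 < c + (1 - α) * a := by
  have : 0 ≤ (1 - α) * a := mul_nonneg (sub_nonneg.2 hα.2) ha.le
  linarith

theorem one_add_uplinkSINR_pos {α : ℝ} (hα : α ∈ Icc (0 : ℝ) 1) :
    0 < 1 + α * a / (c + (1 - α) * a) := by
  have := div_nonneg (mul_nonneg hα.1 ha.le) (add_one_sub_mul_pos_of_mem_Icc ha hc hα).le
  linarith

theorem one_add_d2dSINR_pos {α : ℝ} (hα : α ∈ Icc (0 : ℝ) 1) : 0 < 1 + (1 - α) * a / c := by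
  have := div_nonneg (mul_nonneg (sub_nonneg.2 hα.2) ha.le) hc.le
  linarith

theorem continuousOn_relayUplinkRate : ContinuousOn (relayUplinkRate a c) (Icc 0 1) := by
  refine ContinuousOn.logb ?_ fun α hα => (one_add_uplinkSINR_pos ha hc hα).ne'
  exact continuousOn_const.add <| ContinuousOn.div (by fun_prop) (by fun_prop)
    fun α hα => (add_one_sub_mul_pos_of_mem_Icc ha hc hα).ne'

theorem continuousOn_relayD2DRate : ContinuousOn (relayD2DRate a c) (Icc 0 1) :=
  ContinuousOn.logb (by fun_prop) fun α hα => (one_add_d2dSINR_pos ha hc hα).ne'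

theorem strictMonoOn_relayUplinkRate : StrictMonoOn (relayUplinkRate a c) (Icc 0 1) := by
  refine (strictMonoOn_logb one_lt_two).comp (StrictMonoOn.const_add ?_ 1)
    fun α hα => one_add_uplinkSINR_pos ha hc hα
  intro x hx y hy hxy
  exact div_lt_div₀ (by gcongr) (by gcongr) (mul_nonneg hy.1 ha.le)
    (add_one_sub_mul_pos_of_mem_Icc ha hc hy)

theorem strictAntiOn_relayD2DRate : StrictAntiOn (relayD2DRate a c) (Icc 0 1) := by
  refine (strictMonoOn_logb one_lt_two).comp_strictAntiOn (StrictAntiOn.const_add ?_ 1)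
    fun α hα => one_add_d2dSINR_pos ha hc hα
  intro x _ y _ hxy
  dsimp only
  gcongr

end Rates

/-- solution of the max–min rate problem when the relay transmits at
maximum power `P_C`: there is a unique crossing `ᾰ ∈ (0,1)` of `R_B` and
`R_{CD,S}`, and it maximizes `min(R_B, R_{CD,S})` over `[0,1]`. -/
theorem maxmin_rate_full_power
    (hSB hCB hCD pS σB2 σD2 PC : ℝ)
    (hhSB : 0 < hSB) (hhCB : 0 < hCB) (hhCD : 0 < hCD)
    (hpS : 0 < pS) (hσB : 0 < σB2) (hσD : 0 < σD2) (hPC : 0 < PC) :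
    let RB : ℝ → ℝ := fun α =>
      logb 2 (1 + α * PC * hCB / (pS * hSB + (1 - α) * PC * hCB + σB2))
    let RCDS : ℝ → ℝ := fun α => logb 2 (1 + (1 - α) * PC * hCD / σD2)
    ContinuousOn RB (Icc 0 1) ∧ StrictMonoOn RB (Icc 0 1) ∧
    ContinuousOn RCDS (Icc 0 1) ∧ StrictAntiOn RCDS (Icc 0 1) ∧
    RB 0 - RCDS 0 < 0 ∧ 0 < RB 1 - RCDS 1 ∧
    ∃ α₀ ∈ Ioo (0 : ℝ) 1, RB α₀ = RCDS α₀ ∧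
      (∀ α' ∈ Ioo (0 : ℝ) 1, RB α' = RCDS α' → α' = α₀) ∧
      (∀ α ∈ Icc (0 : ℝ) 1, min (RB α) (RCDS α) ≤ min (RB α₀) (RCDS α₀)) ∧
      min (RB α₀) (RCDS α₀) = RB α₀ ∧ min (RB α₀) (RCDS α₀) = RCDS α₀ := by
  intro RB RCDS
  have hRB : RB = relayUplinkRate (PC * hCB) (pS * hSB + σB2) := by
    funext α; simp only [RB, relayUplinkRate]; ring_nf
  have hRCDS : RCDS = relayD2DRate (PC * hCD) σD2 := by
    funext α; simp only [RCDS, relayD2DRate]; ring_nf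
  have hB : 0 < PC * hCB := by positivity
  have hBc : 0 < pS * hSB + σB2 := by positivity
  have hD : 0 < PC * hCD := by positivity
  have hRB_cont := hRB ▸ continuousOn_relayUplinkRate hB hBc
  have hRB_mono := hRB ▸ strictMonoOn_relayUplinkRate hB hBc
  have hRCDS_cont := hRCDS ▸ continuousOn_relayD2DRate hD hσD
  have hRCDS_anti := hRCDS ▸ strictAntiOn_relayD2DRate hD hσD
  have h01 : (0 : ℝ) < 1 := one_pos
  have hRB0 : RB 0 = 0 := hRB ▸ relayUplinkRate_zero
  have hRCDS1 : RCDS 1 = 0 := hRCDS ▸ relayD2DRate_one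
  have h0 : (0 : ℝ) ∈ Icc 0 1 := left_mem_Icc.2 h01.le
  have h1 : (1 : ℝ) ∈ Icc 0 1 := right_mem_Icc.2 h01.le
  have hleft : RB 0 < RCDS 0 := by linarith [hRCDS_anti h0 h1 h01]
  have hright : RCDS 1 < RB 1 := by linarith [hRB_mono h0 h1 h01]
  obtain ⟨α₀, hα₀, h_eq, h_unique⟩ := exists_unique_eq_of_strictMonoOn_of_strictAntiOn
    h01.le hRB_cont hRCDS_cont hRB_mono hRCDS_anti hleft hright
  refine ⟨hRB_cont, hRB_mono, hRCDS_cont, hRCDS_anti, sub_neg.2 hleft, sub_pos.2 hright,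
    α₀, hα₀, h_eq, fun α' hα' => h_unique α' (Ioo_subset_Icc_self hα'), fun α hα => ?_,
    by rw [h_eq, min_self], by rw [h_eq, min_self]⟩
  exact min_le_min_of_eq_of_monotoneOn_of_antitoneOn hRB_mono.monotoneOn hRCDS_anti.antitoneOn
    (Ioo_subset_Icc_self hα₀) hα h_eq
end
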